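/- arXiv:2105.03067 — 8 statements merged into one kernel-verified Lean document; each statement's English description precedes it below -/
import Mathlib

section
/- Let Z be a real-valued random variable with law P0 such that the moment generating function E_{P0}[e^{λZ}] is finite for every λ ∈ ℝ. Then the stability value of the mean satisfies s(μ,P0) = sup{ exp(−D_KL(P‖P0)) : P a probability measure on ℝ with E_P[Z] = 0 } = inf_{λ∈ℝ} E_{P0}[e^{λZ}]. -/
open MeasureTheory ProbabilityTheory Real
open scoped ENNReal NNReal Classical

/-- Kullback–Leibler divergence `D_KL(P‖P₀)`, valued in `ℝ≥0∞`: it is the integral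
`∫ log (dP/dP₀) dP` when `P ≪ P₀` (and the integrand is integrable), and `+∞` otherwise. -/

noncomputable def KLdiv {α : Type*} [MeasurableSpace α] (P P₀ : Measure α) : ℝ≥0∞ :=
  if P ≪ P₀ ∧ Integrable (llr P P₀) P then ENNReal.ofReal (∫ x, llr P P₀ x ∂P) else ⊤

/-- `exp(−D_KL(P‖P₀))`, with the convention `exp(−∞) = 0`. -/
noncomputable def expNegKL {α : Type*} [MeasurableSpace α] (P P₀ : Measure α) : ℝ :=
  if KLdiv P P₀ = ⊤ then 0 else Real.exp (-(KLdiv P P₀).toReal)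

/-!
By the Gibbs variational inequality (Donsker–Varadhan), for every centered `P ≪ P₀` and every `λ`,
`D_KL(P‖P₀) ≥ λ E_P[Z] - log M(λ) = -log M(λ)`, where `M` is the moment generating function of
`P₀`; this gives `s ≤ inf M`.

Conversely, if `Z` takes both signs with positive probability then `M` is continuous and tends
to `∞` at `±∞`, so it attains its minimum at some `t`. There `(log M)'(t) = 0`, which says that
the exponentially tilted law `e^{tz} P₀(dz) / M(t)` is centered, and its divergence from `P₀` is
exactly `-log M(t)`. If instead `Z` has a sign almost surely, `M(λ)` decreases to `P₀{0}` as
`λ → ∓∞`, and when `P₀{0} > 0` the law `P₀` conditioned on `{0}` is centered with divergence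
`-log P₀{0}`.
-/

open Filter Topology Set

section KullbackLeibler

variable {α : Type*} [MeasurableSpace α] {P P₀ : Measure α}

lemma expNegKL_nonneg (P P₀ : Measure α) : 0 ≤ expNegKL P P₀ := by
  unfold expNegKL
  split_ifs
  exacts [le_rfl, (exp_pos _).le]

lemma expNegKL_le_one (P P₀ : Measure α) : expNegKL P P₀ ≤ 1 := by
  unfold expNegKL
  split_ifs
  exacts [zero_le_one, exp_le_one_iff.2 (neg_nonpos.2 ENNReal.toReal_nonneg)]

lemma expNegKL_eq_zero (h : ¬ (P ≪ P₀ ∧ Integrable (llr P P₀) P)) : expNegKL P P₀ = 0 := by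
  simp [expNegKL, KLdiv, h]

lemma integral_llr_nonneg [IsProbabilityMeasure P] [IsProbabilityMeasure P₀] (hac : P ≪ P₀)
    (hllr : Integrable (llr P P₀) P) : 0 ≤ ∫ x, llr P P₀ x ∂P := by
  simpa using InformationTheory.integral_llr_add_sub_measure_univ_nonneg hac hllr

lemma expNegKL_eq_exp_neg_integral_llr [IsProbabilityMeasure P] [IsProbabilityMeasure P₀]
    (hac : P ≪ P₀) (hllr : Integrable (llr P P₀) P) :
    expNegKL P P₀ = exp (-∫ x, llr P P₀ x ∂P) := by
  simp [expNegKL, KLdiv, hac, hllr, ENNReal.toReal_ofReal (integral_llr_nonneg hac hllr)]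

lemma integral_sub_log_integral_exp_le_integral_llr [IsProbabilityMeasure P]
    [IsProbabilityMeasure P₀] {f : α → ℝ} (hac : P ≪ P₀) (hllr : Integrable (llr P P₀) P)
    (hf : Integrable f P) (hef : Integrable (fun x => exp (f x)) P₀) :
    ∫ x, f x ∂P - log (∫ x, exp (f x) ∂P₀) ≤ ∫ x, llr P P₀ x ∂P := by
  have : IsProbabilityMeasure (P₀.tilted f) := isProbabilityMeasure_tilted hef
  have hgibbs := integral_llr_nonneg (hac.trans (absolutelyContinuous_tilted hef))
    (integrable_llr_tilted_right hac hf hllr hef)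
  rw [integral_llr_tilted_right hac hf hef hllr] at hgibbs
  linarith

lemma llr_tilted_self_ae_eq [SigmaFinite P₀] {f : α → ℝ}
    (hef : Integrable (fun x => exp (f x)) P₀) :
    llr (P₀.tilted f) P₀ =ᵐ[P₀.tilted f] fun x => f x - log (∫ x, exp (f x) ∂P₀) :=
  (tilted_absolutelyContinuous P₀ f).ae_le (log_rnDeriv_tilted_left_self hef)

lemma llr_cond_self_ae_eq [IsFiniteMeasure P₀] {s : Set α} (hs : MeasurableSet s)
    (hP₀s : P₀ s ≠ 0) : llr P₀[|s] P₀ =ᵐ[P₀[|s]] fun _ => -log (P₀.real s) := by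
  have hrestrict : llr (P₀.restrict s) P₀ =ᵐ[P₀.restrict s] 0 := by
    filter_upwards [(Measure.absolutelyContinuous_of_le Measure.restrict_le_self).ae_le
      (Measure.rnDeriv_restrict_self P₀ hs), ae_restrict_mem hs] with x hx hxs
    simp [llr, hx, hxs]
  have hsmul := llr_smul_left (μ := P₀.restrict s) (ν := P₀)
    (Measure.absolutelyContinuous_of_le Measure.restrict_le_self) (P₀ s)⁻¹
    (ENNReal.inv_ne_zero.2 (measure_ne_top _ _)) (ENNReal.inv_ne_top.2 hP₀s)
  change llr ((P₀ s)⁻¹ • P₀.restrict s) P₀ =ᵐ[(P₀ s)⁻¹ • P₀.restrict s] _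
  filter_upwards [Measure.ae_smul_measure hsmul (P₀ s)⁻¹,
    Measure.ae_smul_measure hrestrict (P₀ s)⁻¹] with x hx hx0
  rw [hx, hx0]
  simp [measureReal_def, ENNReal.toReal_inv, log_inv]

lemma expNegKL_cond_self [IsProbabilityMeasure P₀] {s : Set α} (hs : MeasurableSet s)
    (hP₀s : P₀ s ≠ 0) : expNegKL P₀[|s] P₀ = P₀.real s := by
  have : IsProbabilityMeasure P₀[|s] := cond_isProbabilityMeasure hP₀s
  have hllr := llr_cond_self_ae_eq hs hP₀s
  rw [expNegKL_eq_exp_neg_integral_llr cond_absolutelyContinuous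
    ((integrable_congr hllr).2 (integrable_const _)), integral_congr_ae hllr]
  have hpos : 0 < P₀.real s := ENNReal.toReal_pos hP₀s (measure_ne_top _ _)
  simp [exp_log hpos]

lemma expNegKL_tilted_self [IsProbabilityMeasure P₀] {f : α → ℝ}
    (hef : Integrable (fun x => exp (f x)) P₀) (hf : Integrable f (P₀.tilted f)) :
    expNegKL (P₀.tilted f) P₀ = exp (-∫ x, f x ∂(P₀.tilted f)) * ∫ x, exp (f x) ∂P₀ := by
  have : IsProbabilityMeasure (P₀.tilted f) := isProbabilityMeasure_tilted hef
  have hllr := llr_tilted_self_ae_eq hef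
  rw [expNegKL_eq_exp_neg_integral_llr (tilted_absolutelyContinuous P₀ f)
    ((integrable_congr hllr).2 (hf.sub (integrable_const _))), integral_congr_ae hllr,
    integral_sub hf (integrable_const _), integral_const, neg_sub, exp_sub]
  simp [exp_log (integral_exp_pos hef), div_eq_mul_inv, exp_neg, mul_comm]

end KullbackLeibler

section MomentGeneratingFunction

variable {Ω : Type*} [MeasurableSpace Ω] {μ : Measure Ω} {X : Ω → ℝ}

lemma bddBelow_range_mgf : BddBelow (range (mgf X μ)) :=
  ⟨0, by rintro _ ⟨t, rfl⟩; exact mgf_nonneg⟩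

lemma exists_pos_measure_le_ne_zero (hX : ¬ X ≤ᵐ[μ] 0) : ∃ ε > 0, μ {ω | ε ≤ X ω} ≠ 0 := by
  by_contra! h
  refine hX ?_
  have hlt : ∀ᵐ ω ∂μ, ∀ n : ℕ, X ω < 1 / (n + 1) := ae_all_iff.2 fun n => by
    rw [ae_iff]
    simpa only [not_lt] using h _ Nat.one_div_pos_of_nat
  filter_upwards [hlt] with ω hω
  by_contra! hpos
  obtain ⟨n, hn⟩ := exists_nat_one_div_lt hpos
  exact (hω n).not_gt hn

lemma tendsto_mgf_atTop_atTop [IsFiniteMeasure μ]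
    (hmgf : ∀ t, Integrable (fun ω => exp (t * X ω)) μ) (hX : ¬ X ≤ᵐ[μ] 0) :
    Tendsto (mgf X μ) atTop atTop := by
  obtain ⟨ε, hε, hμε⟩ := exists_pos_measure_le_ne_zero hX
  have hc : 0 < μ.real {ω | ε ≤ X ω} := ENNReal.toReal_pos hμε (measure_ne_top _ _)
  refine tendsto_atTop_mono' atTop ?_
    ((tendsto_exp_atTop.comp (tendsto_id.atTop_mul_const hε)).const_mul_atTop hc)
  filter_upwards [eventually_ge_atTop 0] with t ht
  have hchernoff := measure_ge_le_exp_mul_mgf ε ht (hmgf t)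
  rw [neg_mul, exp_neg, inv_mul_eq_div, le_div_iff₀ (exp_pos _)] at hchernoff
  exact hchernoff

lemma tendsto_mgf_atBot_atTop [IsFiniteMeasure μ]
    (hmgf : ∀ t, Integrable (fun ω => exp (t * X ω)) μ) (hX : ¬ 0 ≤ᵐ[μ] X) :
    Tendsto (mgf X μ) atBot atTop := by
  have hnegX : ¬ -X ≤ᵐ[μ] 0 := fun h => hX (by filter_upwards [h] with ω hω; simpa using hω)
  have hneg := (tendsto_mgf_atTop_atTop (fun t => by simpa using hmgf (-t)) hnegX).comp
    tendsto_neg_atBot_atTop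
  simpa [Function.comp_def, mgf_neg] using hneg

lemma exists_forall_mgf_le [IsFiniteMeasure μ]
    (hmgf : ∀ t, Integrable (fun ω => exp (t * X ω)) μ) (hpos : ¬ X ≤ᵐ[μ] 0)
    (hneg : ¬ 0 ≤ᵐ[μ] X) : ∃ t, ∀ s, mgf X μ t ≤ mgf X μ s :=
  (continuous_mgf hmgf).exists_forall_le <| by
    rw [cocompact_eq_atBot_atTop]
    exact tendsto_sup.2 ⟨tendsto_mgf_atBot_atTop hmgf hneg, tendsto_mgf_atTop_atTop hmgf hpos⟩

lemma tendsto_mgf_atBot_of_nonneg [IsFiniteMeasure μ] (hXm : Measurable X) (hX : 0 ≤ᵐ[μ] X) :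
    Tendsto (mgf X μ) atBot (𝓝 (μ.real (X ⁻¹' {0}))) := by
  have hzero : MeasurableSet (X ⁻¹' {0}) := hXm (measurableSet_singleton 0)
  rw [← integral_indicator_one hzero]
  refine tendsto_integral_filter_of_dominated_convergence (fun _ => 1)
    (Eventually.of_forall fun t => (hXm.const_mul t).exp.aestronglyMeasurable) ?_
    (integrable_const 1) ?_
  · filter_upwards [eventually_le_atBot 0] with t ht
    filter_upwards [hX] with ω hω
    simpa using mul_nonpos_of_nonpos_of_nonneg ht hω
  · filter_upwards [hX] with ω hω
    rcases hω.eq_or_lt with h | h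
    · simp [← h]
    · have hω0 : ω ∉ X ⁻¹' {0} := by simpa using h.ne'
      rw [indicator_of_notMem hω0]
      exact tendsto_exp_atBot.comp (tendsto_id.atBot_mul_const h)

lemma iInf_mgf_le_measureReal_preimage_zero [IsFiniteMeasure μ] (hXm : Measurable X)
    (hX : 0 ≤ᵐ[μ] X ∨ X ≤ᵐ[μ] 0) : ⨅ t, mgf X μ t ≤ μ.real (X ⁻¹' {0}) := by
  rcases hX with hX | hX
  · exact ge_of_tendsto (tendsto_mgf_atBot_of_nonneg hXm hX)
      (Eventually.of_forall fun t => ciInf_le bddBelow_range_mgf t)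
  · have hnegX : 0 ≤ᵐ[μ] -X := by filter_upwards [hX] with ω hω; simpa using hω
    have hlim := (tendsto_mgf_atBot_of_nonneg hXm.neg hnegX).comp tendsto_neg_atTop_atBot
    have hpre : (-X) ⁻¹' {0} = X ⁻¹' {0} := by ext; simp
    simp only [Function.comp_def, mgf_neg, neg_neg, hpre] at hlim
    exact ge_of_tendsto hlim (Eventually.of_forall fun t => ciInf_le bddBelow_range_mgf t)

end MomentGeneratingFunction

section CenteredProbability

def IsCenteredProbability (P : Measure ℝ) : Prop :=
  IsProbabilityMeasure P ∧ Integrable (fun z => z) P ∧ ∫ z, z ∂P = 0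

lemma isCenteredProbability_dirac_zero : IsCenteredProbability (Measure.dirac 0) :=
  ⟨inferInstance, integrable_dirac (by simp), by simp⟩

variable {P₀ : Measure ℝ} [IsProbabilityMeasure P₀]

lemma isCenteredProbability_cond_zero (h0 : P₀ {0} ≠ 0) : IsCenteredProbability P₀[|{0}] := by
  have hae : (fun z : ℝ => z) =ᵐ[P₀[|{0}]] 0 := ae_cond_mem (measurableSet_singleton 0)
  exact ⟨cond_isProbabilityMeasure h0, (integrable_congr hae).2 (integrable_zero _ _ _),
    by simp [integral_congr_ae hae]⟩

lemma expNegKL_le_mgf {P : Measure ℝ} (hP : IsCenteredProbability P) {l : ℝ}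
    (hl : Integrable (fun z => exp (l * z)) P₀) : expNegKL P P₀ ≤ mgf id P₀ l := by
  obtain ⟨_, hint, hmean⟩ := hP
  by_cases h : P ≪ P₀ ∧ Integrable (llr P P₀) P
  · obtain ⟨hac, hllr⟩ := h
    have hgibbs := integral_sub_log_integral_exp_le_integral_llr hac hllr (hint.const_mul l) hl
    rw [integral_const_mul, hmean, mul_zero, zero_sub] at hgibbs
    rw [expNegKL_eq_exp_neg_integral_llr hac hllr, ← exp_log (mgf_pos (X := id) hl)]
    exact exp_le_exp.2 (neg_le.1 hgibbs)
  · rw [expNegKL_eq_zero h]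
    exact mgf_nonneg

lemma isCenteredProbability_tilted_of_forall_mgf_le
    (hmgf : ∀ l, Integrable (fun z => exp (l * z)) P₀) {t : ℝ}
    (ht : ∀ s, mgf id P₀ t ≤ mgf id P₀ s) : IsCenteredProbability (P₀.tilted (t * ·)) := by
  have hint : t ∈ interior (integrableExpSet id P₀) := by
    rw [show integrableExpSet id P₀ = univ from eq_univ_of_forall hmgf, interior_univ]
    trivial
  have hmin : IsLocalMin (cgf id P₀) t :=
    Eventually.of_forall fun s => log_le_log (mgf_pos (hmgf t)) (ht s)
  exact ⟨isProbabilityMeasure_tilted (hmgf t), (memLp_tilted_mul hint 1).integrable le_rfl,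
    (integral_tilted_mul_self hint).trans hmin.deriv_eq_zero⟩

lemma expNegKL_tilted_of_isCenteredProbability {t : ℝ}
    (ht : Integrable (fun z => exp (t * z)) P₀)
    (hP : IsCenteredProbability (P₀.tilted (t * ·))) :
    expNegKL (P₀.tilted (t * ·)) P₀ = mgf id P₀ t := by
  obtain ⟨_, hint, hmean⟩ := hP
  rw [expNegKL_tilted_self ht (hint.const_mul t), integral_const_mul, hmean]
  simp [mgf]

lemma exists_isCenteredProbability_iInf_mgf_le_expNegKL
    (hmgf : ∀ l, Integrable (fun z => exp (l * z)) P₀) :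
    ∃ P, IsCenteredProbability P ∧ ⨅ l, mgf id P₀ l ≤ expNegKL P P₀ := by
  by_cases hsign : 0 ≤ᵐ[P₀] id ∨ id ≤ᵐ[P₀] 0
  · have hinf : ⨅ l, mgf id P₀ l ≤ P₀.real {0} :=
      iInf_mgf_le_measureReal_preimage_zero measurable_id hsign
    rcases eq_or_ne (P₀ {0}) 0 with h0 | h0
    · refine ⟨Measure.dirac 0, isCenteredProbability_dirac_zero, hinf.trans ?_⟩
      simpa [measureReal_def, h0] using expNegKL_nonneg (Measure.dirac 0) P₀
    · exact ⟨P₀[|{0}], isCenteredProbability_cond_zero h0,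
        hinf.trans_eq (expNegKL_cond_self (measurableSet_singleton 0) h0).symm⟩
  · obtain ⟨hneg, hpos⟩ := not_or.1 hsign
    obtain ⟨t, ht⟩ := exists_forall_mgf_le hmgf hpos hneg
    have hP := isCenteredProbability_tilted_of_forall_mgf_le hmgf ht
    exact ⟨_, hP, (ciInf_le bddBelow_range_mgf t).trans_eq
      (expNegKL_tilted_of_isCenteredProbability (hmgf t) hP).symm⟩

end CenteredProbability

/-- Donsker–Varadhan characterization of the s-value of the mean:
for `Z ~ P₀` with everywhere-finite moment generating function,
`s(μ, P₀) = sup {exp(−D_KL(P‖P₀)) : E_P[Z] = 0} = inf_λ E_{P₀}[e^{λZ}]`. -/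
theorem svalue_mean_eq_inf_mgf (P₀ : Measure ℝ) [IsProbabilityMeasure P₀]
    (hmgf : ∀ l : ℝ, Integrable (fun z => Real.exp (l * z)) P₀) :
    (⨆ P : {P : Measure ℝ //
        IsProbabilityMeasure P ∧ Integrable (fun z => z) P ∧ ∫ z, z ∂P = 0},
      expNegKL P.1 P₀)
      = ⨅ l : ℝ, ∫ z, Real.exp (l * z) ∂P₀ := by
  change (⨆ P : {P : Measure ℝ // IsCenteredProbability P}, expNegKL P.1 P₀) = ⨅ l, mgf id P₀ l
  have : Nonempty {P : Measure ℝ // IsCenteredProbability P} :=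
    ⟨⟨Measure.dirac 0, isCenteredProbability_dirac_zero⟩⟩
  have hbdd : BddAbove (range fun P : {P : Measure ℝ // IsCenteredProbability P} =>
      expNegKL P.1 P₀) := ⟨1, by rintro _ ⟨P, rfl⟩; exact expNegKL_le_one _ _⟩
  refine le_antisymm (ciSup_le fun P => le_ciInf fun l => expNegKL_le_mgf P.2 (hmgf l)) ?_
  obtain ⟨P, hP, hle⟩ := exists_isCenteredProbability_iInf_mgf_le_expNegKL hmgf
  exact hle.trans (le_ciSup hbdd ⟨P, hP⟩)
end

section
/- Let Z be a real-valued random variable with law P0 having finite moment generating function E_{P0}[e^{λZ}] < ∞ for every λ ∈ ℝ. Suppose the infimum inf_{λ∈ℝ} E_{P0}[e^{λZ}] is attained at some λ* ∈ ℝ. Then the probability measure Q defined by dQ(z) = e^{λ* z} / E_{P0}[e^{λ* Z}] dP0(z) attains the supremum defining the s-value of the mean; that is, E_Q[Z] = 0 and exp(−D_KL(Q‖P0)) = inf_{λ∈ℝ} E_{P0}[e^{λZ}]. -/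
open MeasureTheory ProbabilityTheory Real
open scoped ENNReal NNReal Classical

/-!
The moment generating function `M(λ) = E[exp (λ Z)]` is finite on all of `ℝ`, hence differentiable
with `M'(λ) = E[Z exp (λ Z)]`, which is `M(λ)` times the mean of `Z` under the tilted measure.
At the minimiser `λ*` this derivative vanishes, so `Q` has mean zero. Since
`log (dQ/dP₀) z = λ* z - log M(λ*)`, the divergence is `λ* E_Q[Z] - log M(λ*) = -log M(λ*)`,
and `exp (-D_KL(Q‖P₀)) = M(λ*) = inf M`.
-/

section Tilted

variable {α : Type*} [MeasurableSpace α] {μ : Measure α} [SigmaFinite μ] {f : α → ℝ}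

lemma llr_tilted_left_self_ae_eq (hf : Integrable (fun x ↦ exp (f x)) μ) :
    llr (μ.tilted f) μ =ᵐ[μ.tilted f] fun x ↦ f x - log (∫ x, exp (f x) ∂μ) :=
  (tilted_absolutelyContinuous μ f).ae_le (log_rnDeriv_tilted_left_self hf)

lemma KLdiv_tilted_left_self [NeZero μ] (hf : Integrable (fun x ↦ exp (f x)) μ)
    (hfQ : Integrable f (μ.tilted f)) :
    KLdiv (μ.tilted f) μ =
      ENNReal.ofReal (∫ x, f x ∂(μ.tilted f) - log (∫ x, exp (f x) ∂μ)) := by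
  have := isProbabilityMeasure_tilted hf
  have hllr := llr_tilted_left_self_ae_eq hf
  rw [KLdiv, if_pos ⟨tilted_absolutelyContinuous μ f,
      (hfQ.sub (integrable_const _)).congr hllr.symm⟩,
    integral_congr_ae hllr, integral_sub hfQ (integrable_const _), integral_const, probReal_univ,
    one_smul]

lemma expNegKL_tilted_left_self_of_integral_eq_zero [NeZero μ]
    (hf : Integrable (fun x ↦ exp (f x)) μ) (hfQ : Integrable f (μ.tilted f))
    (hmean : ∫ x, f x ∂(μ.tilted f) = 0) (hle : ∫ x, exp (f x) ∂μ ≤ 1) :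
    expNegKL (μ.tilted f) μ = ∫ x, exp (f x) ∂μ := by
  have hpos := integral_exp_pos hf
  rw [expNegKL, KLdiv_tilted_left_self hf hfQ, hmean, zero_sub, if_neg ENNReal.ofReal_ne_top,
    ENNReal.toReal_ofReal (neg_nonneg.mpr (log_nonpos hpos.le hle)), neg_neg, exp_log hpos]

end Tilted

section MGF

variable {Ω : Type*} [MeasurableSpace Ω] {μ : Measure Ω} {X : Ω → ℝ} {t : ℝ}

lemma integral_tilted_mul_self_eq_zero_of_isLocalMin (ht : t ∈ interior (integrableExpSet X μ))
    (hmin : IsLocalMin (mgf X μ) t) :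
    ∫ ω, X ω ∂(μ.tilted (t * X ·)) = 0 := by
  have hderiv : ∫ ω, X ω * exp (t * X ω) ∂μ = 0 := hmin.hasDerivAt_eq_zero (hasDerivAt_mgf ht)
  simp_rw [integral_tilted_mul_eq_mgf, smul_eq_mul, div_mul_eq_mul_div, integral_div,
    mul_comm (exp _), hderiv, zero_div]

end MGF

/-- if the infimum `inf_λ E_{P₀}[e^{λZ}]` is attained at `λ*`, then the
exponentially tilted measure `dQ(z) = e^{λ* z} / E_{P₀}[e^{λ* Z}] dP₀(z)` attains the supremum
defining the s-value of the mean: `E_Q[Z] = 0` and `exp(−D_KL(Q‖P₀)) = inf_λ E_{P₀}[e^{λZ}]`. -/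
theorem tilted_measure_attains_svalue_mean (P₀ : Measure ℝ) [IsProbabilityMeasure P₀]
    (hmgf : ∀ l : ℝ, Integrable (fun z => Real.exp (l * z)) P₀)
    (lstar : ℝ)
    (hmin : ∀ l : ℝ, ∫ z, Real.exp (lstar * z) ∂P₀ ≤ ∫ z, Real.exp (l * z) ∂P₀) :
    let Q : Measure ℝ := P₀.withDensity
      (fun z => ENNReal.ofReal (Real.exp (lstar * z) / ∫ z', Real.exp (lstar * z') ∂P₀))
    Integrable (fun z => z) Q ∧ ∫ z, z ∂Q = 0 ∧
      expNegKL Q P₀ = ⨅ l : ℝ, ∫ z, Real.exp (l * z) ∂P₀ := by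
  intro Q
  have ht : lstar ∈ interior (integrableExpSet id P₀) := by
    simp [integrableExpSet, hmgf]
  have hmean : ∫ z, z ∂Q = 0 :=
    integral_tilted_mul_self_eq_zero_of_isLocalMin ht (Filter.Eventually.of_forall hmin)
  have hint : Integrable (fun z => z) Q := (memLp_tilted_mul ht 1).integrable le_rfl
  refine ⟨hint, hmean, ?_⟩
  rw [ciInf_eq_of_forall_ge_of_forall_gt_exists_lt hmin fun _ h => ⟨lstar, h⟩]
  exact expNegKL_tilted_left_self_of_integral_eq_zero (hmgf lstar) (hint.const_mul lstar)
    (by rw [integral_const_mul]; exact mul_eq_zero_of_right lstar hmean) (by simpa using hmin 0)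
end

section
/- Let Z, Z_1, Z_2, … be i.i.d. real-valued random variables with law P0 having finite moment generating function E_{P0}[e^{λZ}] < ∞ for every λ ∈ ℝ, and suppose that inf_{λ∈ℝ} E_{P0}[e^{λZ}] is attained at a unique λ* ∈ ℝ. Then the plug-in estimator ŝ_n = inf_{λ∈ℝ} (1/n) Σ_{i=1}^n e^{λ Z_i} converges in probability to inf_{λ∈ℝ} E_{P0}[e^{λZ}] as n → ∞. -/
/-!
By the strong law of large numbers, almost surely the empirical moment generating function
`f_n(λ) = n⁻¹ ∑_{i<n} e^{λ Z_i}` converges to `ψ(λ) = E[e^{λZ}]` at every point `λ* + q`, `q ∈ ℚ`.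
Convexity upgrades this to convergence of the infima. If a convex `f` satisfies
`f x ≤ f (x ± h)`, then `f ≥ 3 f x - f (x - h) - f (x + h)` everywhere. Since `λ*` is a strict
minimiser of `ψ`, this applies to `f_n` at `x = λ*` for a fixed rational `h` once `n` is large, and
by continuity of `ψ` the bound tends to a value within any `ε` of `ψ(λ*)` when `h` is small.
-/

open MeasureTheory ProbabilityTheory Real
open scoped ENNReal NNReal Classical

open Filter Topology Set Finset

theorem ConvexOn.fun_sum {𝕜 E β ι : Type*} [Semiring 𝕜] [PartialOrder 𝕜] [AddCommMonoid E]
    [AddCommMonoid β] [PartialOrder β] [IsOrderedAddMonoid β] [SMul 𝕜 E] [Module 𝕜 β]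
    {t : Set E} {s : Finset ι} {f : ι → E → β} (hf : ∀ i ∈ s, ConvexOn 𝕜 t (f i))
    (ht : Convex 𝕜 t) :
    ConvexOn 𝕜 t fun x => ∑ i ∈ s, f i x := by
  induction s using Finset.induction_on with
  | empty => simpa using convexOn_const (0 : β) ht
  | insert i s hi ih =>
    simp_rw [Finset.sum_insert hi]
    exact (hf i (mem_insert_self i s)).add (ih fun j hj => hf j (mem_insert_of_mem hj))

theorem convexOn_avg_exp_mul (n : ℕ) (z : ℕ → ℝ) :
    ConvexOn ℝ univ fun l => (n : ℝ)⁻¹ * ∑ i ∈ range n, exp (l * z i) := by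
  refine ConvexOn.smul (inv_nonneg.2 n.cast_nonneg) (ConvexOn.fun_sum (fun i _ => ?_) convex_univ)
  exact convexOn_exp.comp_linearMap (LinearMap.id.smulRight (z i))

section ConvexLowerBound

variable {f : ℝ → ℝ} {x y h : ℝ}

theorem ConvexOn.two_mul_sub_le_of_mem_Icc (hf : ConvexOn ℝ univ f) (hh : 0 < h)
    (hr : f x ≤ f (x + h)) (hy : y ∈ Icc (x - h) x) : 2 * f x - f (x + h) ≤ f y := by
  rcases hy.2.eq_or_lt with rfl | hyx
  · linarith
  have hslope := hf.slope_mono_adjacent (mem_univ y) (mem_univ (x + h)) hyx (by linarith)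
  rw [add_sub_cancel_left, div_le_div_iff₀ (by linarith) hh] at hslope
  nlinarith [mul_le_mul_of_nonneg_left (show x - y ≤ h by linarith [hy.1]) (sub_nonneg.2 hr)]

theorem ConvexOn.three_mul_sub_le (hf : ConvexOn ℝ univ f) (hh : 0 < h)
    (hl : f x ≤ f (x - h)) (hr : f x ≤ f (x + h)) (y : ℝ) :
    3 * f x - f (x - h) - f (x + h) ≤ f y := by
  wlog hyx : y ≤ x generalizing f x y
  · have hf' : ConvexOn ℝ univ fun y => f (-y) :=
      ⟨convex_univ, fun a _ b _ s t hs ht hst => by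
        convert hf.2 (mem_univ (-a)) (mem_univ (-b)) hs ht hst using 2
        simp only [smul_eq_mul]
        ring⟩
    have := this hf' (x := -x) (y := -y) (by simpa [neg_add_eq_sub, add_comm] using hr)
      (by simpa [sub_eq_add_neg, add_comm] using hl) (by linarith)
    simp only [neg_neg, neg_sub', sub_neg_eq_add, neg_add_eq_sub] at this
    linarith
  rcases le_or_gt (x - h) y with hxy | hxy
  · linarith [hf.two_mul_sub_le_of_mem_Icc hh hr ⟨hxy, hyx⟩]
  · have h₁ := hf.two_mul_sub_le_of_mem_Icc hh hr ⟨le_rfl, by linarith⟩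
    have h₂ := hf.le_left_of_right_le'' (mem_univ y) (mem_univ x) hxy.le (by linarith) hl
    linarith

end ConvexLowerBound

section InfimumConvergence

variable {f : ℕ → ℝ → ℝ} {ψ : ℝ → ℝ} {c : ℝ}

theorem eventually_forall_sub_lt_of_convexOn (hf : ∀ n, ConvexOn ℝ univ (f n))
    (hψ : ContinuousAt ψ c) (hc : ∀ x ≠ c, ψ c < ψ x)
    (hlim : ∀ q : ℚ, Tendsto (fun n => f n (c + q)) atTop (𝓝 (ψ (c + q))))
    {ε : ℝ} (hε : 0 < ε) :
    ∀ᶠ n in atTop, ∀ y, ψ c - ε < f n y := by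
  obtain ⟨q, hq, hψq⟩ : ∃ q : ℚ, (0 : ℝ) < q ∧ ψ (c - q) + ψ (c + q) < 2 * ψ c + ε := by
    have hsym : Tendsto (fun h => ψ (c - h) + ψ (c + h)) (𝓝 0) (𝓝 (2 * ψ c)) := by
      rw [two_mul]
      exact (hψ.tendsto.comp ((continuous_sub_left c).tendsto' 0 c (sub_zero c))).add
        (hψ.tendsto.comp ((continuous_const_add c).tendsto' 0 c (add_zero c)))
    obtain ⟨δ, hδ, hball⟩ := Metric.eventually_nhds_iff.1
      (hsym.eventually (gt_mem_nhds (lt_add_of_pos_right _ hε)))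
    obtain ⟨q, hq₀, hqδ⟩ := exists_rat_btwn hδ
    exact ⟨q, hq₀, hball (by rwa [dist_zero_right, norm_of_nonneg hq₀.le])⟩
  have hleft : Tendsto (fun n => f n (c - q)) atTop (𝓝 (ψ (c - q))) := by
    simpa [← sub_eq_add_neg] using hlim (-q)
  have hmid : Tendsto (fun n => f n c) atTop (𝓝 (ψ c)) := by simpa using hlim 0
  filter_upwards [hmid.eventually_lt hleft (hc _ (by linarith)),
    hmid.eventually_lt (hlim q) (hc _ (by linarith)),
    (((hmid.const_mul 3).sub hleft).sub (hlim q)).eventually_const_lt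
      (show ψ c - ε < 3 * ψ c - ψ (c - q) - ψ (c + q) by linarith)]
    with n hl hr hbound y
  linarith [(hf n).three_mul_sub_le hq hl.le hr.le y]

theorem tendsto_iInf_of_convexOn (hf : ∀ n, ConvexOn ℝ univ (f n))
    (hψ : ContinuousAt ψ c) (hc : ∀ x ≠ c, ψ c < ψ x)
    (hlim : ∀ q : ℚ, Tendsto (fun n => f n (c + q)) atTop (𝓝 (ψ (c + q)))) :
    Tendsto (fun n => ⨅ y, f n y) atTop (𝓝 (ψ c)) := by
  have hlow : ∀ ε > 0, ∀ᶠ n in atTop, ∀ y, ψ c - ε < f n y := fun ε hε =>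
    eventually_forall_sub_lt_of_convexOn hf hψ hc hlim hε
  refine tendsto_order.2 ⟨fun a ha => ?_, fun a ha => ?_⟩
  · filter_upwards [hlow _ (half_pos (sub_pos.2 ha))] with n hn
    exact (by linarith : a < ψ c - (ψ c - a) / 2).trans_le (le_ciInf fun y => (hn y).le)
  · have hmid : Tendsto (fun n => f n c) atTop (𝓝 (ψ c)) := by simpa using hlim 0
    filter_upwards [hlow 1 one_pos, hmid.eventually_lt_const ha] with n hn hna
    exact (ciInf_le ⟨ψ c - 1, forall_mem_range.2 fun y => (hn y).le⟩ c).trans_lt hna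

end InfimumConvergence

theorem measurable_iInf_of_continuous {Ω α : Type*} [MeasurableSpace Ω] [TopologicalSpace α]
    [TopologicalSpace.SeparableSpace α] {F : Ω → α → ℝ} (hmeas : ∀ a, Measurable fun ω => F ω a)
    (hcont : ∀ ω, Continuous (F ω)) :
    Measurable fun ω => ⨅ a, F ω a := by
  obtain ⟨S, hS_countable, hS_dense⟩ := TopologicalSpace.exists_countable_dense α
  have := hS_countable.to_subtype
  simp_rw [← hS_dense.ciInf' (hcont _)]
  exact Measurable.iInf fun s => hmeas s

theorem strong_law_ae_comp {Ω α : Type*} [MeasurableSpace Ω] [MeasurableSpace α]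
    {μ : Measure Ω} {P₀ : Measure α} {Z : ℕ → Ω → α} (hmeas : ∀ i, Measurable (Z i))
    (hlaw : ∀ i, μ.map (Z i) = P₀) (hindep : Pairwise fun i j => IndepFun (Z i) (Z j) μ)
    {g : α → ℝ} (hg : Measurable g) (hint : Integrable g P₀) :
    ∀ᵐ ω ∂μ, Tendsto (fun n : ℕ => (n : ℝ)⁻¹ * ∑ i ∈ range n, g (Z i ω)) atTop
      (𝓝 (∫ z, g z ∂P₀)) := by
  have hident : ∀ i, IdentDistrib (Z i) (Z 0) μ μ := fun i =>
    ⟨(hmeas i).aemeasurable, (hmeas 0).aemeasurable, by rw [hlaw i, hlaw 0]⟩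
  have hint₀ : Integrable (g ∘ Z 0) μ := (hlaw 0 ▸ hint).comp_measurable (hmeas 0)
  have hmean : ∫ ω, g (Z 0 ω) ∂μ = ∫ z, g z ∂P₀ := by
    rw [← hlaw 0, integral_map (hmeas 0).aemeasurable hg.aestronglyMeasurable]
  simpa [hmean] using strong_law_ae (fun i ω => g (Z i ω)) hint₀
    (fun i j hij => (hindep hij).comp hg hg) (fun i => (hident i).comp hg)

theorem plugin_svalue_mean_consistent_general {Ω : Type*} [MeasurableSpace Ω]
    (μ : Measure Ω) [IsProbabilityMeasure μ]
    (P₀ : Measure ℝ)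
    (Z : ℕ → Ω → ℝ) (hmeas : ∀ i, Measurable (Z i))
    (hlaw : ∀ i, μ.map (Z i) = P₀)
    (hindep : iIndepFun Z μ)
    (hmgf : ∀ l : ℝ, Integrable (fun z => Real.exp (l * z)) P₀)
    (huniq : ∃! lstar : ℝ,
      ∀ l : ℝ, ∫ z, Real.exp (lstar * z) ∂P₀ ≤ ∫ z, Real.exp (l * z) ∂P₀) :
    TendstoInMeasure μ
      (fun (n : ℕ) ω => ⨅ l : ℝ, (n : ℝ)⁻¹ * ∑ i ∈ Finset.range n, Real.exp (l * Z i ω))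
      Filter.atTop
      (fun _ => ⨅ l : ℝ, ∫ z, Real.exp (l * z) ∂P₀) := by
  obtain ⟨c, hc_min, hc_uniq⟩ := huniq
  set ψ : ℝ → ℝ := fun l => ∫ z, exp (l * z) ∂P₀
  have hψ : Continuous ψ := continuous_mgf (X := id) hmgf
  have hc : ∀ x ≠ c, ψ c < ψ x := fun x hx =>
    (hc_min x).lt_of_ne fun h => hx (hc_uniq x fun l => h ▸ hc_min l)
  have hinf : ⨅ l, ψ l = ψ c :=
    (IsLeast.isGLB ⟨mem_range_self c, forall_mem_range.2 hc_min⟩).ciInf_eq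
  rw [hinf]
  have hlim : ∀ᵐ ω ∂μ, ∀ q : ℚ, Tendsto
      (fun n : ℕ => (n : ℝ)⁻¹ * ∑ i ∈ range n, exp ((c + q) * Z i ω)) atTop (𝓝 (ψ (c + q))) :=
    ae_all_iff.2 fun q => strong_law_ae_comp hmeas hlaw (fun i j hij => hindep.indepFun hij)
      (by fun_prop) (hmgf _)
  refine tendstoInMeasure_of_tendsto_ae (fun n => (measurable_iInf_of_continuous
    (fun l => by fun_prop) (fun ω => by fun_prop)).aestronglyMeasurable) ?_
  filter_upwards [hlim] with ω hω
  exact tendsto_iInf_of_convexOn (fun n => convexOn_avg_exp_mul n (Z · ω)) hψ.continuousAt hc hω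

/-- consistency of the plug-in estimator of the s-value of the mean:
for i.i.d. `Z₁, Z₂, …` with law `P₀` having finite MGF whose infimum is attained at a unique
`λ*`, the estimator `ŝ_n = inf_λ (1/n) ∑_{i<n} e^{λ Z_i}` converges in probability to
`inf_λ E_{P₀}[e^{λZ}]`. -/
theorem plugin_svalue_mean_consistent {Ω : Type*} [MeasurableSpace Ω]
    (μ : Measure Ω) [IsProbabilityMeasure μ]
    (P₀ : Measure ℝ) [IsProbabilityMeasure P₀]
    (Z : ℕ → Ω → ℝ) (hmeas : ∀ i, Measurable (Z i))
    (hlaw : ∀ i, μ.map (Z i) = P₀)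
    (hindep : iIndepFun Z μ)
    (hmgf : ∀ l : ℝ, Integrable (fun z => Real.exp (l * z)) P₀)
    (huniq : ∃! lstar : ℝ,
      ∀ l : ℝ, ∫ z, Real.exp (lstar * z) ∂P₀ ≤ ∫ z, Real.exp (l * z) ∂P₀) :
    TendstoInMeasure μ
      (fun (n : ℕ) ω => ⨅ l : ℝ, (n : ℝ)⁻¹ * ∑ i ∈ Finset.range n, Real.exp (l * Z i ω))
      Filter.atTop
      (fun _ => ⨅ l : ℝ, ∫ z, Real.exp (l * z) ∂P₀) :=
  plugin_svalue_mean_consistent_general μ P₀ Z hmeas hlaw hindep hmgf huniq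
end

section
/- Let Z ~ N(μ, σ²) with σ > 0 and law P0. Then the s-value of the mean equals e^{−μ²/(2σ²)}; that is, sup{ exp(−D_KL(P‖P0)) : P a probability measure with E_P[Z] = 0 } = e^{−μ²/(2σ²)}. -/
/-!
For Gaussians of a common variance `v` the log-likelihood ratio of `N(a, v)` against `N(μ, v)` is
affine in `x`, so by the chain rule for log-likelihood ratios every `P` with finite mean `a`
satisfies the Pythagorean identity `KL(P ‖ N(μ, v)) = KL(P ‖ N(a, v)) + (a - μ)² / (2v)`.
For `a = 0` this bounds `KL(P ‖ N(m, σ²))` below by `m² / (2σ²)`, with equality at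
`P = N(0, σ²)`, which is itself centered.
-/

open MeasureTheory ProbabilityTheory Real
open scoped ENNReal NNReal Classical

open InformationTheory Set

section ChainRule

variable {α : Type*} [MeasurableSpace α] {μ ν κ : Measure α}

lemma llr_eq_llr_add_llr [SigmaFinite μ] [SigmaFinite ν] [SigmaFinite κ]
    (hμν : μ ≪ ν) (hνκ : ν ≪ κ) :
    llr μ κ =ᵐ[μ] fun x ↦ llr μ ν x + llr ν κ x := by
  have hμκ := hμν.trans hνκ
  filter_upwards [hμκ.ae_le (Measure.rnDeriv_mul_rnDeriv (κ := κ) hμν), Measure.rnDeriv_pos hμν,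
    hμν.ae_le (Measure.rnDeriv_lt_top μ ν), hμν.ae_le (Measure.rnDeriv_pos hνκ),
    hμκ.ae_le (Measure.rnDeriv_lt_top ν κ)] with x hx hμν_pos hμν_lt hνκ_pos hνκ_lt
  rw [llr, llr, llr, ← hx, Pi.mul_apply, ENNReal.toReal_mul,
    log_mul (ENNReal.toReal_pos hμν_pos.ne' hμν_lt.ne).ne'
      (ENNReal.toReal_pos hνκ_pos.ne' hνκ_lt.ne).ne']

lemma klDiv_eq_klDiv_add_integral [IsFiniteMeasure μ] [IsFiniteMeasure ν] [IsFiniteMeasure κ]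
    {g : α → ℝ} (hνκ : ν ≪ κ) (hκν : κ ≪ ν) (h_univ : ν univ = κ univ)
    (hg : llr ν κ =ᵐ[ν] g) (hg_int : Integrable g μ) (hg_nonneg : 0 ≤ ∫ x, g x ∂μ) :
    klDiv μ κ = klDiv μ ν + ENNReal.ofReal (∫ x, g x ∂μ) := by
  by_cases hμν : μ ≪ ν
  swap
  · rw [klDiv_of_not_ac hμν, klDiv_of_not_ac fun hμκ ↦ hμν (hμκ.trans hκν), top_add]
  have hsplit : llr μ κ =ᵐ[μ] fun x ↦ llr μ ν x + g x := by
    filter_upwards [llr_eq_llr_add_llr hμν hνκ, hμν.ae_le hg] with x hx hgx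
    rw [hx, hgx]
  by_cases h_int : Integrable (llr μ ν) μ
  swap
  · have h_int' : ¬ Integrable (llr μ κ) μ := fun h ↦
      h_int ((h.sub hg_int).congr (by filter_upwards [hsplit] with x hx; simp [hx]))
    rw [klDiv_of_not_integrable h_int, klDiv_of_not_integrable h_int', top_add]
  rw [klDiv_of_ac_of_integrable (hμν.trans hνκ) ((h_int.add hg_int).congr hsplit.symm),
    klDiv_of_ac_of_integrable hμν h_int, ← ENNReal.ofReal_add
      (integral_llr_add_sub_measure_univ_nonneg hμν h_int) hg_nonneg,
    integral_congr_ae hsplit, integral_add h_int hg_int]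
  simp only [measureReal_def, h_univ]
  congr 1
  ring

end ChainRule

section Gaussian

variable {v : ℝ≥0}

lemma log_gaussianPDFReal (μ : ℝ) (hv : v ≠ 0) (x : ℝ) :
    log (gaussianPDFReal μ v x) = -log √(2 * π * v) - (x - μ) ^ 2 / (2 * v) := by
  have hsqrt : 0 < √(2 * π * v) := by
    have : (0 : ℝ) < v := by positivity
    positivity
  rw [gaussianPDFReal, log_mul (inv_pos.2 hsqrt).ne' (exp_pos _).ne', log_inv, log_exp]
  ring

lemma llr_gaussianReal_volume (μ : ℝ) (hv : v ≠ 0) :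
    llr (gaussianReal μ v) volume =ᵐ[volume]
      fun x ↦ -log √(2 * π * v) - (x - μ) ^ 2 / (2 * v) := by
  filter_upwards [rnDeriv_gaussianReal μ v] with x hx
  rw [llr, hx, toReal_gaussianPDF, log_gaussianPDFReal μ hv]

lemma llr_gaussianReal (μ₁ μ₂ : ℝ) (hv : v ≠ 0) :
    llr (gaussianReal μ₁ v) (gaussianReal μ₂ v) =ᵐ[volume]
      fun x ↦ (μ₁ - μ₂) / v * (x - μ₁) + (μ₁ - μ₂) ^ 2 / (2 * v) := by
  have hchain := (gaussianReal_absolutelyContinuous' μ₁ hv).ae_le <| llr_eq_llr_add_llr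
    (gaussianReal_absolutelyContinuous μ₁ hv) (gaussianReal_absolutelyContinuous' μ₂ hv)
  filter_upwards [hchain, llr_gaussianReal_volume μ₁ hv, llr_gaussianReal_volume μ₂ hv,
    neg_llr (gaussianReal_absolutelyContinuous' μ₂ hv)] with x hx h₁ h₂ hneg
  rw [hx, h₁, ← neg_neg (llr volume _ x), ← Pi.neg_apply (f := llr volume _), hneg, h₂]
  field_simp
  ring

lemma klDiv_gaussianReal_eq_add (P : Measure ℝ) [IsProbabilityMeasure P]
    (hP : Integrable (fun x ↦ x) P) (μ : ℝ) (hv : v ≠ 0) :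
    klDiv P (gaussianReal μ v) =
      klDiv P (gaussianReal (∫ x, x ∂P) v) + ENNReal.ofReal ((∫ x, x ∂P - μ) ^ 2 / (2 * v)) := by
  set m := ∫ x, x ∂P
  have hlin_int : Integrable (fun x ↦ (m - μ) / v * (x - m)) P :=
    (hP.sub (integrable_const m)).const_mul _
  have hg_int : Integrable (fun x ↦ (m - μ) / v * (x - m) + (m - μ) ^ 2 / (2 * v)) P :=
    hlin_int.add (integrable_const _)
  have hg_integral : ∫ x, (m - μ) / v * (x - m) + (m - μ) ^ 2 / (2 * v) ∂P
      = (m - μ) ^ 2 / (2 * v) := by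
    rw [integral_add hlin_int (integrable_const _),
      integral_const_mul, integral_sub hP (integrable_const m)]
    simp [m]
  rw [← hg_integral]
  exact klDiv_eq_klDiv_add_integral
    ((gaussianReal_absolutelyContinuous m hv).trans (gaussianReal_absolutelyContinuous' μ hv))
    ((gaussianReal_absolutelyContinuous μ hv).trans (gaussianReal_absolutelyContinuous' m hv))
    (by simp) ((gaussianReal_absolutelyContinuous m hv).ae_le (llr_gaussianReal m μ hv)) hg_int
    (by rw [hg_integral]; positivity)

lemma klDiv_gaussianReal_gaussianReal (μ₁ μ₂ : ℝ) (hv : v ≠ 0) :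
    klDiv (gaussianReal μ₁ v) (gaussianReal μ₂ v) = ENNReal.ofReal ((μ₁ - μ₂) ^ 2 / (2 * v)) := by
  rw [klDiv_gaussianReal_eq_add _ ((memLp_id_gaussianReal 1).integrable le_rfl) μ₂ hv,
    integral_id_gaussianReal, klDiv_self, zero_add]

lemma ofReal_le_klDiv_gaussianReal (P : Measure ℝ) [IsProbabilityMeasure P]
    (hP : Integrable (fun x ↦ x) P) (μ : ℝ) (hv : v ≠ 0) :
    ENNReal.ofReal ((∫ x, x ∂P - μ) ^ 2 / (2 * v)) ≤ klDiv P (gaussianReal μ v) := by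
  rw [klDiv_gaussianReal_eq_add P hP μ hv]
  exact le_add_self

end Gaussian

section ExpNegKL

variable {α : Type*} [MeasurableSpace α] {P Q : Measure α}

lemma KLdiv_eq_klDiv [IsFiniteMeasure P] [IsFiniteMeasure Q] (h_univ : P univ = Q univ) :
    KLdiv P Q = klDiv P Q := by
  rw [KLdiv]
  split_ifs with h
  · rw [klDiv_of_ac_of_integrable h.1 h.2, measureReal_def, measureReal_def, h_univ,
      add_sub_cancel_right]
  · exact (klDiv_eq_top_iff.2 fun hac hint ↦ h ⟨hac, hint⟩).symm

lemma expNegKL_le_exp_neg {c : ℝ} (h : ENNReal.ofReal c ≤ KLdiv P Q) :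
    expNegKL P Q ≤ exp (-c) := by
  rw [expNegKL]
  split_ifs with htop
  · exact (exp_pos _).le
  · exact exp_le_exp.2 (neg_le_neg ((ENNReal.ofReal_le_iff_le_toReal htop).1 h))

lemma expNegKL_of_KLdiv_eq_ofReal {c : ℝ} (hc : 0 ≤ c) (h : KLdiv P Q = ENNReal.ofReal c) :
    expNegKL P Q = exp (-c) := by
  rw [expNegKL, h, if_neg ENNReal.ofReal_ne_top, ENNReal.toReal_ofReal hc]

end ExpNegKL

/-- for `Z ~ N(m, σ²)` with `σ > 0`, the s-value of the mean equals
`exp(−m²/(2σ²))`. -/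
theorem svalue_mean_gaussian (m σ : ℝ) (hσ : 0 < σ) :
    (⨆ P : {P : Measure ℝ //
        IsProbabilityMeasure P ∧ Integrable (fun z => z) P ∧ ∫ z, z ∂P = 0},
      expNegKL P.1 (gaussianReal m ⟨σ ^ 2, sq_nonneg σ⟩)) =
      Real.exp (-(m ^ 2) / (2 * σ ^ 2)) := by
  set v : ℝ≥0 := ⟨σ ^ 2, sq_nonneg σ⟩
  have hv : v ≠ 0 := fun h ↦ (pow_pos hσ 2).ne' (congrArg NNReal.toReal h)
  have hc : (0 - m) ^ 2 / (2 * (v : ℝ)) = m ^ 2 / (2 * σ ^ 2) := by rw [zero_sub, neg_sq]; rfl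
  let Q₀ : {P : Measure ℝ // IsProbabilityMeasure P ∧ Integrable (fun z => z) P ∧ ∫ z, z ∂P = 0} :=
    ⟨gaussianReal 0 v, inferInstance, (memLp_id_gaussianReal 1).integrable le_rfl,
      integral_id_gaussianReal⟩
  have := Nonempty.intro Q₀
  have h_eq : expNegKL Q₀.1 (gaussianReal m v) = exp (-(m ^ 2 / (2 * σ ^ 2))) := by
    refine expNegKL_of_KLdiv_eq_ofReal (by positivity) ?_
    rw [KLdiv_eq_klDiv (by simp), klDiv_gaussianReal_gaussianReal 0 m hv, hc]
  rw [neg_div]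
  refine ciSup_eq_of_forall_le_of_forall_lt_exists_gt (fun ⟨P, hP, hP_int, hP_mean⟩ ↦ ?_)
    fun w hw ↦ ⟨Q₀, h_eq ▸ hw⟩
  refine expNegKL_le_exp_neg ?_
  have h_bound := ofReal_le_klDiv_gaussianReal P hP_int m hv
  rwa [hP_mean, hc, ← KLdiv_eq_klDiv (by simp)] at h_bound
end

section
/- Let W_n = [0,1]^n and let θ : int(W_n) → ℝ be continuously differentiable. Let w* be a point of the probability simplex S_n = {w ∈ ℝⁿ : Σ_i w_i = 1, w_i ≥ 0} that is a locally optimal solution of the problem: minimize Σ_{i=1}^n w_i log(n w_i) over w ∈ S_n subject to θ(w) = c. Assume there is no constant r ∈ ℝ with ∇θ(w*) = r·(1,…,1). Then there exists λ ∈ ℝ such that w*_i is proportional to e^{λ ∂_i θ(w*)} for all i ∈ {1,…,n}, i.e. there is a constant C > 0 with w*_i = C e^{λ ∂_i θ(w*)} for all i. -/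
/-! Since `w*` lies in the open cube, the constraints `wᵢ ≥ 0` are inactive near `w*`, so `w*` is a
local minimum of the entropy on the level set of the two constraints `∑ wᵢ = 1` and `θ w = c`.
The Lagrange multiplier rule gives `(μ, ν, κ) ≠ 0` with `μ + ν ∂ᵢθ(w*) + κ (log (n w*ᵢ) + 1) = 0`
for every `i`. If `κ = 0` this forces `∇θ(w*)` to be constant or all multipliers to vanish, so
`κ ≠ 0`, and solving for `w*ᵢ` gives the exponential form with `λ = -ν / κ`. -/

open Set Filter Topology Real

section Coordinates

variable {ι : Type*} [Fintype ι]

lemma sum_smul_proj_apply_single [DecidableEq ι] (g : ι → ℝ) (j : ι) :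
    (∑ i, g i • (ContinuousLinearMap.proj i : (ι → ℝ) →L[ℝ] ℝ)) (Pi.single j 1) = g j := by
  simp [Pi.single_apply]

lemma ContinuousAt.sum_smul_proj {X : Type*} [TopologicalSpace X] {g : X → ι → ℝ} {x : X}
    (hg : ContinuousAt g x) :
    ContinuousAt (fun y => ∑ i, g y i • (ContinuousLinearMap.proj i : (ι → ℝ) →L[ℝ] ℝ)) x :=
  tendsto_finsetSum _ fun i _ => ((continuous_apply i).continuousAt.comp hg).smul continuousAt_const

lemma hasStrictFDerivAt_sum_apply (w : ι → ℝ) :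
    HasStrictFDerivAt (fun x : ι → ℝ => ∑ i, x i)
      (∑ i, (1 : ℝ) • (ContinuousLinearMap.proj i : (ι → ℝ) →L[ℝ] ℝ)) w := by
  simpa using HasStrictFDerivAt.fun_sum fun i _ =>
    (ContinuousLinearMap.proj i : (ι → ℝ) →L[ℝ] ℝ).hasStrictFDerivAt (x := w)

lemma hasStrictDerivAt_mul_log_const_mul {a x : ℝ} (ha : a ≠ 0) (hx : x ≠ 0) :
    HasStrictDerivAt (fun y => y * log (a * y)) (log (a * x) + 1) x := by
  have h := (hasStrictDerivAt_id x).fun_mul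
    (((hasStrictDerivAt_id x).const_mul a).log (mul_ne_zero ha hx))
  refine h.congr_deriv ?_
  simp only [id, one_mul, mul_one]
  field_simp

lemma hasStrictFDerivAt_sum_mul_log_const_mul {a : ℝ} (ha : a ≠ 0) {w : ι → ℝ}
    (hw : ∀ i, w i ≠ 0) :
    HasStrictFDerivAt (fun x : ι → ℝ => ∑ i, x i * log (a * x i))
      (∑ i, (log (a * w i) + 1) • (ContinuousLinearMap.proj i : (ι → ℝ) →L[ℝ] ℝ)) w :=
  HasStrictFDerivAt.fun_sum fun i _ =>
    (hasStrictDerivAt_mul_log_const_mul ha (hw i)).comp_hasStrictFDerivAt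
      (f := fun x : ι → ℝ => x i) w (hasStrictFDerivAt_apply i w)

lemma pos_of_mem_interior_pi_Ici {w : ι → ℝ} (hw : w ∈ interior (pi univ fun _ => Ici (0 : ℝ)))
    (i : ι) : 0 < w i := by
  rw [interior_pi_set finite_univ] at hw
  simpa using hw i (mem_univ i)

end Coordinates

lemma isLocalMinOn_of_mem_interior {E : Type*} [SeminormedAddCommGroup E] {φ : E → ℝ}
    {s K : Set E} {w : E} (hw : w ∈ interior K)
    (hmin : ∃ ε > 0, ∀ x ∈ s, x ∈ K → ‖x - w‖ < ε → φ w ≤ φ x) : IsLocalMinOn φ s w := by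
  obtain ⟨ε, hε, hmin⟩ := hmin
  have hK : K ∈ 𝓝[s] w := mem_nhdsWithin_of_mem_nhds (mem_interior_iff_mem_nhds.1 hw)
  have hball : Metric.ball w ε ∈ 𝓝[s] w := mem_nhdsWithin_of_mem_nhds (Metric.ball_mem_nhds w hε)
  filter_upwards [self_mem_nhdsWithin, hK, hball] with x hs hxK hxε
  exact hmin x hs hxK (by rwa [← dist_eq_norm])

lemma IsLocalExtrOn.exists_multipliers_of_hasStrictFDerivAt_two {E : Type*}
    [NormedAddCommGroup E] [NormedSpace ℝ E] [CompleteSpace E] {f g φ : E → ℝ}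
    {f' g' φ' : StrongDual ℝ E} {x₀ : E}
    (hextr : IsLocalExtrOn φ {x | f x = f x₀ ∧ g x = g x₀} x₀)
    (hf : HasStrictFDerivAt f f' x₀) (hg : HasStrictFDerivAt g g' x₀)
    (hφ : HasStrictFDerivAt φ φ' x₀) :
    ∃ a b c : ℝ, (a, b, c) ≠ 0 ∧ ∀ v, a * f' v + b * g' v + c * φ' v = 0 := by
  have hextr' : IsLocalExtrOn φ {x | ∀ i, ![f, g] i x = ![f, g] i x₀} x₀ := by
    simpa [Fin.forall_fin_two] using hextr
  obtain ⟨Λ, Λ₀, hne, hsum⟩ := hextr'.exists_multipliers_of_hasStrictFDerivAt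
    (f' := ![f', g']) (fun i => by fin_cases i <;> assumption) hφ
  refine ⟨Λ 0, Λ 1, Λ₀, ?_, fun v => ?_⟩
  · contrapose! hne
    simp only [Prod.mk_eq_zero] at hne
    exact Prod.ext (funext fun i => by fin_cases i <;> simp [hne]) hne.2.2
  · simpa [Fin.sum_univ_two] using congr($hsum v)

lemma ne_zero_of_forall_add_mul_add_mul_eq_zero {ι : Type*} {g h : ι → ℝ} {a b c : ℝ}
    (hg : ¬ ∃ r, g = fun _ => r) (hne : (a, b, c) ≠ 0) (hrel : ∀ i, a + b * g i + c * h i = 0) :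
    c ≠ 0 := by
  rintro rfl
  rcases eq_or_ne b 0 with rfl | hb
  · obtain ⟨i⟩ : Nonempty ι := by
      by_contra hι
      exact hg ⟨0, funext fun i => (hι ⟨i⟩).elim⟩
    exact hne (by simpa using hrel i)
  · exact hg ⟨-a / b, funext fun i => by field_simp; linarith [hrel i]⟩

lemma eq_mul_exp_of_add_mul_add_mul_log_eq_zero {a x t μ ν κ : ℝ} (ha : 0 < a) (hx : 0 < x)
    (hκ : κ ≠ 0) (h : μ + ν * t + κ * (log (a * x) + 1) = 0) :
    x = exp (-1 - μ / κ) / a * exp (-ν / κ * t) := by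
  have hlog : log (a * x) = -1 - μ / κ + -ν / κ * t := by
    field_simp
    linear_combination h
  rw [div_mul_eq_mul_div, ← exp_add, ← hlog, exp_log (mul_pos ha hx)]
  field_simp

theorem entropy_local_min_necessary_conditions_general (n : ℕ) (c : ℝ)
    (θ : (Fin n → ℝ) → ℝ) (θ' : (Fin n → ℝ) → (Fin n → ℝ))
    (hdiff : ∀ w ∈ interior (Set.pi Set.univ fun _ : Fin n => Set.Icc (0 : ℝ) 1),
      HasFDerivAt θ (∑ i, θ' w i • (ContinuousLinearMap.proj i : (Fin n → ℝ) →L[ℝ] ℝ)) w)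
    (hcont : ContinuousOn θ' (interior (Set.pi Set.univ fun _ : Fin n => Set.Icc (0 : ℝ) 1)))
    (wstar : Fin n → ℝ)
    (hwmem : wstar ∈ interior (Set.pi Set.univ fun _ : Fin n => Set.Icc (0 : ℝ) 1))
    (hwsum : ∑ i, wstar i = 1)
    (hwc : θ wstar = c)
    (hlocal : ∃ ε > (0 : ℝ), ∀ w : Fin n → ℝ, (∑ i, w i) = 1 → (∀ i, 0 ≤ w i) →
      θ w = c → ‖w - wstar‖ < ε →
      ∑ i, wstar i * Real.log (n * wstar i) ≤ ∑ i, w i * Real.log (n * w i))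
    (hnonconst : ¬ ∃ r : ℝ, θ' wstar = fun _ => r) :
    ∃ (l C : ℝ), 0 < C ∧ ∀ i, wstar i = C * Real.exp (l * θ' wstar i) := by
  have hn : (0 : ℝ) < n := Nat.cast_pos.2 <| Nat.pos_of_ne_zero <| by rintro rfl; simp at hwsum
  have hw_int : wstar ∈ interior (pi univ fun _ => Ici (0 : ℝ)) :=
    interior_mono (pi_mono fun _ _ => Icc_subset_Ici_self) hwmem
  have hw_pos := pos_of_mem_interior_pi_Ici hw_int
  have hw_nhds := isOpen_interior.mem_nhds hwmem
  have hθ := hasStrictFDerivAt_of_hasFDerivAt_of_continuousAt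
    (eventually_of_mem hw_nhds hdiff) (hcont.continuousAt hw_nhds).sum_smul_proj
  obtain ⟨ε, hε, hloc⟩ := hlocal
  have hmin : IsLocalMinOn (fun w : Fin n → ℝ => ∑ i, w i * log (n * w i))
      {x | ∑ i, x i = ∑ i, wstar i ∧ θ x = θ wstar} wstar :=
    isLocalMinOn_of_mem_interior hw_int ⟨ε, hε, fun x ⟨hs, hθx⟩ hx hxε =>
      hloc x (hs.trans hwsum) (fun i => hx i (mem_univ i)) (hθx.trans hwc) hxε⟩
  obtain ⟨μ, ν, κ, hne, hrel⟩ := IsLocalExtrOn.exists_multipliers_of_hasStrictFDerivAt_two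
    hmin.isExtr (hasStrictFDerivAt_sum_apply wstar) hθ
    (hasStrictFDerivAt_sum_mul_log_const_mul hn.ne' fun i => (hw_pos i).ne')
  have hcoord : ∀ i, μ + ν * θ' wstar i + κ * (log (n * wstar i) + 1) = 0 := fun i => by
    simpa only [sum_smul_proj_apply_single, mul_one] using hrel (Pi.single i 1)
  have hκ := ne_zero_of_forall_add_mul_add_mul_eq_zero hnonconst hne hcoord
  exact ⟨_, _, by positivity, fun i => eq_mul_exp_of_add_mul_add_mul_log_eq_zero hn (hw_pos i) hκ
    (hcoord i)⟩

/-- first-order necessary conditions for the entropy-minimization problem: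
if `w*` in the probability simplex is a local minimum of `∑ᵢ wᵢ log(n wᵢ)` subject to
`θ(w) = c`, `θ` continuously differentiable on the interior of the unit cube with gradient `θ'`,
and `∇θ(w*)` is not a multiple of `(1,…,1)`, then there are `λ ∈ ℝ` and `C > 0` with
`w*ᵢ = C e^{λ ∂ᵢθ(w*)}` for all `i`. -/
theorem entropy_local_min_necessary_conditions (n : ℕ) (c : ℝ)
    (θ : (Fin n → ℝ) → ℝ) (θ' : (Fin n → ℝ) → (Fin n → ℝ))
    (hdiff : ∀ w ∈ interior (Set.pi Set.univ fun _ : Fin n => Set.Icc (0 : ℝ) 1),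
      HasFDerivAt θ (∑ i, θ' w i • (ContinuousLinearMap.proj i : (Fin n → ℝ) →L[ℝ] ℝ)) w)
    (hcont : ContinuousOn θ' (interior (Set.pi Set.univ fun _ : Fin n => Set.Icc (0 : ℝ) 1)))
    (wstar : Fin n → ℝ)
    (hwmem : wstar ∈ interior (Set.pi Set.univ fun _ : Fin n => Set.Icc (0 : ℝ) 1))
    (hwsum : ∑ i, wstar i = 1) (hwpos : ∀ i, 0 ≤ wstar i)
    (hwc : θ wstar = c)
    (hlocal : ∃ ε > (0 : ℝ), ∀ w : Fin n → ℝ, (∑ i, w i) = 1 → (∀ i, 0 ≤ w i) →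
      θ w = c → ‖w - wstar‖ < ε →
      ∑ i, wstar i * Real.log (n * wstar i) ≤ ∑ i, w i * Real.log (n * w i))
    (hnonconst : ¬ ∃ r : ℝ, θ' wstar = fun _ => r) :
    ∃ (l C : ℝ), 0 < C ∧ ∀ i, wstar i = C * Real.exp (l * θ' wstar i) :=
  entropy_local_min_necessary_conditions_general n c θ θ' hdiff hcont wstar hwmem hwsum hwc hlocal
    hnonconst
end

section
/- Let θ : int([0,1]^n) → ℝ be continuously differentiable, let δ, L > 0, c ∈ ℝ, and let w^k be a point of the probability simplex with strictly positive entries. Then the minimizer over {w : Σ_{i=1}^n w_i = 1} of the majorizer G_L(w, w^k) = δ( θ(w^k) − c + ⟨∇θ(w^k), w − w^k⟩ + L Σ_{i=1}^n w_i log(w_i / w^k_i) ) + Σ_{i=1}^n w_i log w_i is unique and is given componentwise by w^{k+1}_i proportional to e^{ −(δ/(1+Lδ)) ∂_i θ(w^k) } · (w^k_i)^{ Lδ/(1+Lδ) } for all i ∈ {1,…,n}. -/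
open MeasureTheory Real

/-- Strict Gibbs inequality: KL divergence between distinct probability vectors is positive. -/
lemma kl_pos_aux (n : ℕ) (p q : Fin n → ℝ) (hp : ∀ i, 0 ≤ p i) (hq : ∀ i, 0 < q i)
    (hps : ∑ i, p i = 1) (hqs : ∑ i, q i = 1) (hne : p ≠ q) :
    0 < ∑ i, p i * (Real.log (p i) - Real.log (q i)) := by
  have hterm : ∀ i : Fin n, p i * (Real.log (q i) - Real.log (p i)) ≤ q i - p i := by
    intro i
    rcases eq_or_lt_of_le (hp i) with h0 | h0
    · rw [← h0]; simpa using (hq i).le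
    · have hlog : Real.log (q i) - Real.log (p i) = Real.log (q i / p i) :=
        (Real.log_div (hq i).ne' h0.ne').symm
      rw [hlog]
      have hle := Real.log_le_sub_one_of_pos (div_pos (hq i) h0)
      calc p i * Real.log (q i / p i) ≤ p i * (q i / p i - 1) :=
            mul_le_mul_of_nonneg_left hle h0.le
        _ = q i - p i := by field_simp
  obtain ⟨j, hj⟩ := Function.ne_iff.mp hne
  have hstrict : p j * (Real.log (q j) - Real.log (p j)) < q j - p j := by
    rcases eq_or_lt_of_le (hp j) with h0 | h0
    · rw [← h0]; simpa using hq j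
    · have hlog : Real.log (q j) - Real.log (p j) = Real.log (q j / p j) :=
        (Real.log_div (hq j).ne' h0.ne').symm
      rw [hlog]
      have hne1 : q j / p j ≠ 1 := by
        intro h
        exact hj ((div_eq_one_iff_eq h0.ne').mp h).symm
      have hlt := Real.log_lt_sub_one_of_pos (div_pos (hq j) h0) hne1
      calc p j * Real.log (q j / p j) < p j * (q j / p j - 1) :=
            mul_lt_mul_of_pos_left hlt h0
        _ = q j - p j := by field_simp
  have hsum : ∑ i, p i * (Real.log (q i) - Real.log (p i)) < ∑ i, (q i - p i) :=
    Finset.sum_lt_sum (fun i _ => hterm i) ⟨j, Finset.mem_univ j, hstrict⟩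
  have h1 : ∑ i, (q i - p i) = (0 : ℝ) := by
    rw [Finset.sum_sub_distrib, hps, hqs]; ring
  have h2 : ∑ i, p i * (Real.log (p i) - Real.log (q i))
      = -∑ i, p i * (Real.log (q i) - Real.log (p i)) := by
    rw [← Finset.sum_neg_distrib]
    exact Finset.sum_congr rfl fun i _ => by ring
  linarith

/-- closed form of the MM update: for `δ, L > 0` and a point `w^k` of the
probability simplex with strictly positive entries, the minimizer over the simplex of the
majorizer `G_L(w, w^k) = δ(θ(w^k) − c + ⟨∇θ(w^k), w − w^k⟩ + L ∑ᵢ wᵢ log(wᵢ/w^kᵢ)) + ∑ᵢ wᵢ log wᵢ`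
is unique and given by `w^{k+1}ᵢ ∝ e^{−(δ/(1+Lδ)) ∂ᵢθ(w^k)} (w^kᵢ)^{Lδ/(1+Lδ)}`. -/
theorem mm_majorizer_minimizer (n : ℕ) (hn : 0 < n)
    (θ : (Fin n → ℝ) → ℝ) (c δ L : ℝ) (hδ : 0 < δ) (hL : 0 < L)
    (wk : Fin n → ℝ) (hwksum : ∑ i, wk i = 1) (hwkpos : ∀ i, 0 < wk i)
    (g : Fin n → ℝ)
    (hg : HasFDerivAt θ (∑ i, g i • (ContinuousLinearMap.proj i : (Fin n → ℝ) →L[ℝ] ℝ)) wk) :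
    let G : (Fin n → ℝ) → ℝ := fun w =>
      δ * (θ wk - c + (∑ i, g i * (w i - wk i)) + L * ∑ i, w i * Real.log (w i / wk i))
        + ∑ i, w i * Real.log (w i)
    let wnext : Fin n → ℝ := fun i =>
      (Real.exp (-(δ / (1 + L * δ)) * g i) * wk i ^ (L * δ / (1 + L * δ)))
        / ∑ j, Real.exp (-(δ / (1 + L * δ)) * g j) * wk j ^ (L * δ / (1 + L * δ))
    ((∑ i, wnext i = 1) ∧ ∀ i, 0 ≤ wnext i) ∧
      ∀ w : Fin n → ℝ, (∑ i, w i) = 1 → (∀ i, 0 ≤ w i) → w ≠ wnext → G wnext < G w := by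
  intro G wnext
  haveI : Nonempty (Fin n) := ⟨⟨0, hn⟩⟩
  have hβpos : (0 : ℝ) < 1 + L * δ := by nlinarith
  have hβ0 : (1 : ℝ) + L * δ ≠ 0 := hβpos.ne'
  set E : Fin n → ℝ := fun i =>
    Real.exp (-(δ / (1 + L * δ)) * g i) * wk i ^ (L * δ / (1 + L * δ)) with hE
  have hEpos : ∀ i, 0 < E i := fun i =>
    mul_pos (Real.exp_pos _) (Real.rpow_pos_of_pos (hwkpos i) _)
  set Z : ℝ := ∑ j, E j with hZ
  have hZpos : 0 < Z := Finset.sum_pos (fun j _ => hEpos j) Finset.univ_nonempty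
  have hwnext : ∀ i, wnext i = E i / Z := fun i => rfl
  -- E i as a single exponential
  have hEexp : ∀ i, E i = Real.exp (-((δ * g i - δ * L * Real.log (wk i)) / (1 + L * δ))) := by
    intro i
    rw [hE]
    dsimp only
    rw [Real.rpow_def_of_pos (hwkpos i), ← Real.exp_add]
    congr 1
    field_simp
    ring
  have hwnsum : ∑ i, wnext i = 1 := by
    simp only [hwnext]
    rw [← Finset.sum_div, ← hZ, div_self hZpos.ne']
  have hwnpos : ∀ i, 0 < wnext i := fun i => by
    rw [hwnext]; exact div_pos (hEpos i) hZpos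
  have hlogwn : ∀ i, Real.log (wnext i)
      = -((δ * g i - δ * L * Real.log (wk i)) / (1 + L * δ)) - Real.log Z := by
    intro i
    rw [hwnext, Real.log_div (hEpos i).ne' hZpos.ne', hEexp i, Real.log_exp]
  -- per-index identity
  have hidx : ∀ (i : Fin n) (x : ℝ), 0 ≤ x →
      δ * (g i * x) + δ * L * (x * Real.log (x / wk i)) + x * Real.log x
      = (1 + L * δ) * (x * (Real.log x - Real.log (wnext i)))
        - (1 + L * δ) * Real.log Z * x := by
    intro i x hx
    rcases eq_or_lt_of_le hx with h0 | h0
    · rw [← h0]; simp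
    · rw [Real.log_div h0.ne' (hwkpos i).ne', hlogwn i]
      field_simp
      ring
  -- key identity for G on the simplex
  have hkey : ∀ w : Fin n → ℝ, (∑ i, w i) = 1 → (∀ i, 0 ≤ w i) →
      G w = (δ * (θ wk - c) - δ * ∑ i, g i * wk i - (1 + L * δ) * Real.log Z)
        + (1 + L * δ) * ∑ i, w i * (Real.log (w i) - Real.log (wnext i)) := by
    intro w hwsum hwpos
    have h1 : ∑ i, (δ * (g i * w i) + δ * L * (w i * Real.log (w i / wk i))
          + w i * Real.log (w i))
        = ∑ i, ((1 + L * δ) * (w i * (Real.log (w i) - Real.log (wnext i)))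
          - (1 + L * δ) * Real.log Z * w i) :=
      Finset.sum_congr rfl fun i _ => hidx i (w i) (hwpos i)
    have hA : ∑ i, (δ * (g i * w i) + δ * L * (w i * Real.log (w i / wk i))
          + w i * Real.log (w i))
        = δ * (∑ i, g i * w i) + δ * L * (∑ i, w i * Real.log (w i / wk i))
          + ∑ i, w i * Real.log (w i) := by
      rw [Finset.sum_add_distrib, Finset.sum_add_distrib, Finset.mul_sum, Finset.mul_sum]
    have hB : ∑ i, ((1 + L * δ) * (w i * (Real.log (w i) - Real.log (wnext i)))
          - (1 + L * δ) * Real.log Z * w i)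
        = (1 + L * δ) * (∑ i, w i * (Real.log (w i) - Real.log (wnext i)))
          - (1 + L * δ) * Real.log Z := by
      rw [Finset.sum_sub_distrib, ← Finset.mul_sum, ← Finset.mul_sum, hwsum, mul_one]
    rw [hA, hB] at h1
    have hgw : ∑ i, g i * (w i - wk i) = (∑ i, g i * w i) - ∑ i, g i * wk i := by
      rw [← Finset.sum_sub_distrib]
      exact Finset.sum_congr rfl fun i _ => by ring
    show δ * (θ wk - c + (∑ i, g i * (w i - wk i))
        + L * ∑ i, w i * Real.log (w i / wk i)) + ∑ i, w i * Real.log (w i) = _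
    rw [hgw]
    linarith [h1]
  refine ⟨⟨hwnsum, fun i => (hwnpos i).le⟩, ?_⟩
  intro w hwsum hwpos hne
  have hGn : G wnext = δ * (θ wk - c) - δ * ∑ i, g i * wk i - (1 + L * δ) * Real.log Z := by
    rw [hkey wnext hwnsum (fun i => (hwnpos i).le)]
    simp
  have hGw := hkey w hwsum hwpos
  have hklpos := kl_pos_aux n w wnext hwpos hwnpos hwsum hwnsum hne
  rw [hGn, hGw]
  nlinarith [mul_pos hβpos hklpos]
end

section
/- Let 𝒳 ⊆ ℝᵐ be an open convex set and 𝒴 ⊂ ℝᵈ a compact set. Let f_n : 𝒳 × 𝒴 → ℝ be a sequence of functions, each convex in its first variable, converging pointwise on 𝒳 × 𝒴 to a function f. Suppose that for each x ∈ 𝒳, g_n(x) = sup_{y∈𝒴} |f_n(x,y) − f(x,y)| → 0 as n → ∞, and that sup_{y∈𝒴} |f(x,y)| < ∞ for each x ∈ 𝒳. Then for every compact set S ⊂ 𝒳, sup_{x∈S} sup_{y∈𝒴} |f_n(x,y) − f(x,y)| → 0 as n → ∞. -/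
/-! A family of convex functions bounded at every point is bounded above near each point, by its
values at the vertices of a simplex around it; reflecting through the point bounds it below as
well, so it is equi-Lipschitz on a smaller ball. Applied to `f n · y` along the filter
`atTop ×ˢ 𝓟 𝒴` (all large `n`, all `y ∈ 𝒴`), this gives a Lipschitz constant near `x₀` that is
uniform in `n` and `y` and passes to `flim`. Two equi-Lipschitz families that are uniformly close
at `x₀` stay uniformly close near `x₀`, and compactness of `S` makes this uniform on `S`. -/

open Filter Set Metric Topology NNReal

section Convex

variable {E : Type*} [NormedAddCommGroup E] [NormedSpace ℝ E]

theorem ConvexOn.abs_le_of_forall_le {f : E → ℝ} {x₀ x : E} {r B : ℝ}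
    (hf : ConvexOn ℝ (ball x₀ r) f) (hB : ∀ x ∈ ball x₀ r, f x ≤ B) (hx : x ∈ ball x₀ r) :
    |f x| ≤ B + 2 * |f x₀| := by
  have hx₀ : x₀ ∈ ball x₀ r := mem_ball_self (pos_of_mem_ball hx)
  have hx' : (2 : ℝ) • x₀ - x ∈ ball x₀ r := by
    rw [mem_ball, dist_eq_norm, show (2 : ℝ) • x₀ - x - x₀ = x₀ - x by module, ← dist_eq_norm,
      dist_comm]
    exact hx
  have hmid := hf.2 hx hx' (by norm_num : (0 : ℝ) ≤ 1 / 2) (by norm_num : (0 : ℝ) ≤ 1 / 2)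
    (by norm_num)
  rw [show (1 / 2 : ℝ) • x + (1 / 2 : ℝ) • ((2 : ℝ) • x₀ - x) = x₀ by module, smul_eq_mul,
    smul_eq_mul] at hmid
  rw [abs_le]
  constructor <;> linarith [hB x hx, hB _ hx', neg_abs_le (f x₀), le_abs_self (f x₀)]

variable [FiniteDimensional ℝ E] {ι : Type*} {l : Filter ι} {g : ι → E → ℝ} {s : Set E} {x₀ : E}

theorem ConvexOn.exists_ball_eventually_le (hs : s ∈ 𝓝 x₀)
    (hg : ∀ᶠ i in l, ConvexOn ℝ s (g i)) (hup : ∀ x ∈ s, ∃ B, ∀ᶠ i in l, g i x ≤ B) :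
    ∃ r > 0, ball x₀ r ⊆ s ∧ ∃ B, ∀ᶠ i in l, ∀ x ∈ ball x₀ r, g i x ≤ B := by
  obtain ⟨b, hb_int, hb_sub⟩ := exists_mem_interior_convexHull_affineBasis hs
  obtain ⟨r, hr, hball⟩ := Metric.mem_nhds_iff.1 (mem_interior_iff_mem_nhds.1 hb_int)
  have hvert : range b ⊆ s := (subset_convexHull ℝ _).trans hb_sub
  choose B hB using fun j => hup (b j) (hvert ⟨j, rfl⟩)
  refine ⟨r, hr, hball.trans hb_sub, ⨆ j, B j, ?_⟩
  filter_upwards [hg, eventually_all.2 hB] with i hgi hBi x hx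
  obtain ⟨_, ⟨j, rfl⟩, hle⟩ := hgi.exists_ge_of_mem_convexHull hvert (hball hx)
  exact hle.trans ((hBi j).trans (le_ciSup (Finite.bddAbove_range B) j))

theorem ConvexOn.exists_nhds_eventually_lipschitzOnWith (hs : s ∈ 𝓝 x₀)
    (hg : ∀ᶠ i in l, ConvexOn ℝ s (g i)) (hbdd : ∀ x ∈ s, ∃ A, ∀ᶠ i in l, |g i x| ≤ A) :
    ∃ K, ∃ U ∈ 𝓝 x₀, ∀ᶠ i in l, LipschitzOnWith K (g i) U := by
  obtain ⟨r, hr, hrs, B, hB⟩ := exists_ball_eventually_le hs hg fun x hx =>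
    (hbdd x hx).imp fun _ hA => hA.mono fun _ => (le_abs_self _).trans
  obtain ⟨A, hA⟩ := hbdd x₀ (mem_of_mem_nhds hs)
  refine ⟨(2 * (B + 2 * A) / (r / 2)).toNNReal, ball x₀ (r - r / 2),
    ball_mem_nhds _ (by linarith), ?_⟩
  filter_upwards [hg, hB, hA] with i hgi hBi hAi
  have hgi' := hgi.subset hrs (convex_ball _ _)
  exact hgi'.lipschitzOnWith_of_abs_le (half_pos hr) fun x hx =>
    (hgi'.abs_le_of_forall_le hBi hx).trans (by linarith)

end Convex

section Lipschitz

variable {ι X Z : Type*} [PseudoMetricSpace X] [PseudoMetricSpace Z] {l : Filter ι}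
  {F G : ι → X → Z} {K : ℝ≥0} {U : Set X}

theorem LipschitzOnWith.of_tendsto [l.NeBot] {f : X → Z}
    (hF : ∀ᶠ i in l, LipschitzOnWith K (F i) U)
    (hlim : ∀ x ∈ U, Tendsto (fun i => F i x) l (𝓝 (f x))) : LipschitzOnWith K f U :=
  LipschitzOnWith.of_dist_le_mul fun x hx y hy =>
    le_of_tendsto ((hlim x hx).dist (hlim y hy)) (hF.mono fun _ hi => hi.dist_le_mul x hx y hy)

theorem eventually_nhds_prod_dist_le_of_lipschitzOnWith {x₀ : X} (hU : U ∈ 𝓝 x₀)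
    (hF : ∀ᶠ i in l, LipschitzOnWith K (F i) U) (hG : ∀ᶠ i in l, LipschitzOnWith K (G i) U)
    (hx₀ : ∀ ε > 0, ∀ᶠ i in l, dist (F i x₀) (G i x₀) ≤ ε) {ε : ℝ} (hε : 0 < ε) :
    ∀ᶠ p in 𝓝 x₀ ×ˢ l, dist (F p.2 p.1) (G p.2 p.1) ≤ ε := by
  have hsmall : ∀ᶠ x in 𝓝 x₀, 2 * K * dist x x₀ ≤ ε / 2 :=
    ((continuous_const.mul (continuous_id.dist continuous_const)).tendsto' x₀ 0
      (by simp)).eventually (eventually_le_nhds (half_pos hε))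
  filter_upwards [(Eventually.and hU hsmall).prod_mk (hF.and (hG.and (hx₀ _ (half_pos hε))))]
  rintro ⟨x, i⟩ ⟨⟨hxU, hxd⟩, hFi, hGi, hi⟩
  have hx₀U := mem_of_mem_nhds hU
  calc dist (F i x) (G i x)
      ≤ dist (F i x) (F i x₀) + dist (F i x₀) (G i x₀) + dist (G i x₀) (G i x) :=
        dist_triangle4 ..
    _ ≤ K * dist x x₀ + ε / 2 + K * dist x₀ x := by
        gcongr
        exacts [hFi.dist_le_mul x hxU x₀ hx₀U, hGi.dist_le_mul x₀ hx₀U x hxU]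
    _ ≤ ε := by rw [dist_comm x₀ x]; linarith

end Lipschitz

theorem IsCompact.eventually_forall_of_forall_eventually_nhds_prod {X ι : Type*}
    [TopologicalSpace X] {S : Set X} (hS : IsCompact S) {l : Filter ι} {P : X → ι → Prop}
    (hP : ∀ x ∈ S, ∀ᶠ p in 𝓝 x ×ˢ l, P p.1 p.2) : ∀ᶠ i in l, ∀ x ∈ S, P x i := by
  obtain ⟨u, hu, t, ht, hut⟩ := mem_prod_iff.1 (hS.mem_nhdsSet_prod_of_forall hP)
  filter_upwards [ht] with i hi x hx
  exact hut (mk_mem_prod (subset_of_mem_nhdsSet hu hx) hi)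

theorem uniform_convergence_convex_compact_param_general {m d : ℕ}
    (𝒳 : Set (Fin m → ℝ)) (h𝒳open : IsOpen 𝒳)
    (𝒴 : Set (Fin d → ℝ))
    (f : ℕ → (Fin m → ℝ) → (Fin d → ℝ) → ℝ) (flim : (Fin m → ℝ) → (Fin d → ℝ) → ℝ)
    (hconv : ∀ n, ∀ y ∈ 𝒴, ConvexOn ℝ 𝒳 (fun x => f n x y))
    (hptwise : ∀ x ∈ 𝒳, ∀ y ∈ 𝒴, Tendsto (fun n => f n x y) atTop (nhds (flim x y)))
    (hunif_y : ∀ x ∈ 𝒳, ∀ ε > (0 : ℝ), ∃ N : ℕ, ∀ n ≥ N, ∀ y ∈ 𝒴, |f n x y - flim x y| ≤ ε)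
    (hbdd : ∀ x ∈ 𝒳, ∃ M : ℝ, ∀ y ∈ 𝒴, |flim x y| ≤ M) :
    ∀ S ⊆ 𝒳, IsCompact S →
      ∀ ε > (0 : ℝ), ∃ N : ℕ, ∀ n ≥ N, ∀ x ∈ S, ∀ y ∈ 𝒴, |f n x y - flim x y| ≤ ε := by
  intro S hS hSc ε hε
  set l := (atTop : Filter ℕ) ×ˢ 𝓟 𝒴
  have hmem : ∀ᶠ i in l, i.2 ∈ 𝒴 := eventually_prod_principal_iff.2 (.of_forall fun _ _ => id)
  have hconv_l : ∀ᶠ i in l, ConvexOn ℝ 𝒳 (fun x => f i.1 x i.2) :=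
    hmem.mono fun i => hconv i.1 i.2
  have hclose : ∀ x ∈ 𝒳, ∀ δ > 0, ∀ᶠ i in l, dist (f i.1 x i.2) (flim x i.2) ≤ δ :=
    fun x hx δ hδ => by
      simpa only [Real.dist_eq] using
        eventually_prod_principal_iff.2 (eventually_atTop.2 (hunif_y x hx δ hδ))
  have hbdd_l : ∀ x ∈ 𝒳, ∃ A, ∀ᶠ i in l, |f i.1 x i.2| ≤ A := fun x hx => by
    obtain ⟨M, hM⟩ := hbdd x hx
    refine ⟨M + 1, ?_⟩
    filter_upwards [hclose x hx 1 one_pos, hmem] with i hi hy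
    rw [Real.dist_eq] at hi
    linarith [hM _ hy, abs_sub_abs_le_abs_sub (f i.1 x i.2) (flim x i.2)]
  have hlocal : ∀ x₀ ∈ 𝒳, ∀ᶠ p in 𝓝 x₀ ×ˢ l, dist (f p.2.1 p.1 p.2.2) (flim p.1 p.2.2) ≤ ε := by
    intro x₀ hx₀
    obtain ⟨K, U, hU, hLip⟩ :=
      ConvexOn.exists_nhds_eventually_lipschitzOnWith (h𝒳open.mem_nhds hx₀) hconv_l hbdd_l
    replace hLip := hLip.mono fun i hi => hi.mono (inter_subset_left (t := 𝒳))
    have hLip_lim : ∀ᶠ i in l, LipschitzOnWith K (fun x => flim x i.2) (U ∩ 𝒳) :=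
      hmem.mono fun i hy => .of_tendsto ((eventually_prod_principal_iff.1 hLip).mono
        fun n hn => hn i.2 hy) fun x hx => hptwise x hx.2 i.2 hy
    exact eventually_nhds_prod_dist_le_of_lipschitzOnWith (F := fun i x => f i.1 x i.2)
      (inter_mem hU (h𝒳open.mem_nhds hx₀)) hLip hLip_lim (hclose x₀ hx₀) hε
  obtain ⟨N, hN⟩ := eventually_atTop.1 <| eventually_prod_principal_iff.1 <|
    hSc.eventually_forall_of_forall_eventually_nhds_prod (l := l)
      (P := fun x i => dist (f i.1 x i.2) (flim x i.2) ≤ ε) fun x hx => hlocal x (hS hx)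
  exact ⟨N, fun n hn x hx y hy => by simpa only [Real.dist_eq] using hN n hn y hy x hx⟩

/-- uniform convergence of convex functions with a compact parameter:
if `f_n(·, y)` are convex on an open convex `𝒳 ⊆ ℝᵐ` for each `y` in a compact `𝒴 ⊂ ℝᵈ`,
`f_n → f` pointwise on `𝒳 × 𝒴`, for each `x ∈ 𝒳` the convergence is uniform in `y ∈ 𝒴`, and
`sup_{y∈𝒴} |f(x,y)| < ∞` for each `x ∈ 𝒳`, then `f_n → f` uniformly on `S × 𝒴` for every
compact `S ⊂ 𝒳`. -/
theorem uniform_convergence_convex_compact_param {m d : ℕ}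
    (𝒳 : Set (Fin m → ℝ)) (h𝒳open : IsOpen 𝒳) (h𝒳conv : Convex ℝ 𝒳)
    (𝒴 : Set (Fin d → ℝ)) (h𝒴 : IsCompact 𝒴)
    (f : ℕ → (Fin m → ℝ) → (Fin d → ℝ) → ℝ) (flim : (Fin m → ℝ) → (Fin d → ℝ) → ℝ)
    (hconv : ∀ n, ∀ y ∈ 𝒴, ConvexOn ℝ 𝒳 (fun x => f n x y))
    (hptwise : ∀ x ∈ 𝒳, ∀ y ∈ 𝒴, Tendsto (fun n => f n x y) atTop (nhds (flim x y)))
    (hunif_y : ∀ x ∈ 𝒳, ∀ ε > (0 : ℝ), ∃ N : ℕ, ∀ n ≥ N, ∀ y ∈ 𝒴, |f n x y - flim x y| ≤ ε)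
    (hbdd : ∀ x ∈ 𝒳, ∃ M : ℝ, ∀ y ∈ 𝒴, |flim x y| ≤ M) :
    ∀ S ⊆ 𝒳, IsCompact S →
      ∀ ε > (0 : ℝ), ∃ N : ℕ, ∀ n ≥ N, ∀ x ∈ S, ∀ y ∈ 𝒴, |f n x y - flim x y| ≤ ε :=
  uniform_convergence_convex_compact_param_general 𝒳 h𝒳open 𝒴 f flim hconv hptwise hunif_y hbdd
end

section
/- Let E be an open convex subset of ℝᵖ and let F_1, F_2, … be a sequence of random concave functions on E (i.e., for each n and each sample point ω, the map x ↦ F_n(ω, x) is concave on E) such that F_n(x) converges in probability to f(x) as n → ∞ for every x ∈ E, where f is a real-valued function on E. Suppose f has a unique maximum at a point x̂ ∈ E, and let X̂_n be random points of E maximizing F_n (i.e., F_n(ω, X̂_n(ω)) = sup_{x∈E} F_n(ω, x) for each ω). Then F_n(X̂_n) converges in probability to f(x̂) as n → ∞. -/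
/-!
The limit `f` is concave as a limit in probability of concave functions, hence continuous on `E`.
Fix `ε > 0`. For a concave `G`, closeness to `f` at finitely many points controls `G` near `x̂`:
at the vertices of a polytope around `x̂` it bounds `G` from below on a ball `B(x̂, 2δ)` (minimum
principle), and then at the points of a fine net of the sphere `S(x̂, δ)` it bounds `G` from
above on that sphere, by extrapolating along chords. As `f < f x̂ - g` on `S(x̂, δ)`, this gives
`G < G x̂` on the sphere, so a maximiser `X` of `G` lies in `B(x̂, δ)`, and reflecting through `x̂`
bounds `G X` by `2 G x̂` minus that lower bound, i.e. by about `f x̂`. Finally, the probability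
that `F_n` is far from `f` at one of finitely many points tends to `0`.
-/

open MeasureTheory Filter Metric Set Topology

section ConcaveBounds

variable {V : Type*}

theorem ConcaveOn.le_one_add_mul_sub_mul [AddCommGroup V] [Module ℝ V] {s : Set V}
    {G : V → ℝ} (hG : ConcaveOn ℝ s G) {u y : V} {κ : ℝ} (hκ : 0 < κ) (hu : u ∈ s)
    (hv : y + κ⁻¹ • (y - u) ∈ s) :
    G u ≤ (1 + κ) * G y - κ * G (y + κ⁻¹ • (y - u)) := by
  have hκ' : 1 + κ ≠ 0 := by positivity
  have hy : (1 / (1 + κ)) • u + (κ / (1 + κ)) • (y + κ⁻¹ • (y - u)) = y := by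
    match_scalars <;> field_simp <;> ring
  have h := hG.2 hu hv (show 0 ≤ 1 / (1 + κ) by positivity) (show 0 ≤ κ / (1 + κ) by positivity)
    (by field_simp)
  rw [hy, smul_eq_mul, smul_eq_mul] at h
  generalize G (y + κ⁻¹ • (y - u)) = Gv at h ⊢
  field_simp at h
  linarith

variable [NormedAddCommGroup V] [NormedSpace ℝ V] {s : Set V} {G : V → ℝ}

theorem ConcaveOn.le_one_add_mul_sub_mul_of_forall_le (hG : ConcaveOn ℝ s G) {x y u : V}
    {r κ m : ℝ} (hκ : 0 < κ) (hball : closedBall x (2 * r) ⊆ s)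
    (hm : ∀ w ∈ closedBall x (2 * r), m ≤ G w) (hy : y ∈ closedBall x r) (hu : u ∈ s)
    (huy : dist u y ≤ κ * r) :
    G u ≤ (1 + κ) * G y - κ * m := by
  set v := y + κ⁻¹ • (y - u)
  have hvy : dist v y ≤ r := by
    rw [dist_eq_norm, add_sub_cancel_left, norm_smul, Real.norm_eq_abs, abs_inv,
      abs_of_pos hκ, ← dist_eq_norm, dist_comm, inv_mul_le_iff₀ hκ]
    exact huy
  have hv : v ∈ closedBall x (2 * r) := by
    rw [mem_closedBall] at hy ⊢
    linarith [dist_triangle v y x]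
  have := hG.le_one_add_mul_sub_mul hκ hu (hball hv)
  nlinarith [hm v hv]

theorem ConcaveOn.dist_le_of_isMaxOn (hG : ConcaveOn ℝ s G) {x X : V} {r : ℝ} (hr : 0 ≤ r)
    (hx : x ∈ s) (hX : X ∈ s) (hXmax : IsMaxOn G s X) (hsphere : ∀ u ∈ sphere x r, G u < G x) :
    dist X x ≤ r := by
  by_contra! hfar
  have hpos : 0 < dist x X := by rw [dist_comm]; linarith
  set t := r / dist x X
  have ht : t ∈ Icc (0 : ℝ) 1 :=
    ⟨by positivity, (div_le_one hpos).2 (by rw [dist_comm]; exact hfar.le)⟩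
  have hu : AffineMap.lineMap x X t ∈ sphere x r := by
    rw [mem_sphere, dist_lineMap_left, Real.norm_of_nonneg ht.1, div_mul_cancel₀ _ hpos.ne']
  have hmin := hG.ge_on_segment hx hX (lineMap_mem_segment ℝ x X ht)
  rw [min_eq_left (hXmax hx)] at hmin
  exact (hsphere _ hu).not_ge hmin

theorem ConcaveOn.le_two_mul_sub_of_isMaxOn (hG : ConcaveOn ℝ s G) {x X : V} {r m : ℝ}
    (hr : 0 ≤ r) (hball : closedBall x (2 * r) ⊆ s) (hm : ∀ w ∈ closedBall x (2 * r), m ≤ G w)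
    (hsphere : ∀ u ∈ sphere x r, G u < G x) (hX : X ∈ s) (hXmax : IsMaxOn G s X) :
    G X ≤ 2 * G x - m := by
  have hx : x ∈ s := hball (mem_closedBall_self (by positivity))
  have hXx := hG.dist_le_of_isMaxOn hr hx hX hXmax hsphere
  have := hG.le_one_add_mul_sub_mul_of_forall_le one_pos hball hm (mem_closedBall_self hr) hX
    (by rwa [one_mul])
  linarith

end ConcaveBounds

theorem IsCompact.exists_pos_forall_le_sub {X : Type*} [TopologicalSpace X] {K : Set X}
    (hK : IsCompact K) {f : X → ℝ} (hf : ContinuousOn f K) {c : ℝ} (hlt : ∀ x ∈ K, f x < c) :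
    ∃ g > 0, ∀ x ∈ K, f x ≤ c - g := by
  rcases K.eq_empty_or_nonempty with rfl | hne
  · exact ⟨1, one_pos, by simp⟩
  obtain ⟨v, hv, hvmax⟩ := hK.exists_isMaxOn hne hf
  exact ⟨c - f v, sub_pos.2 (hlt v hv), fun x hx => by simpa using hvmax hx⟩

section FiniteDimensional

variable {V : Type*} [NormedAddCommGroup V] [NormedSpace ℝ V] [FiniteDimensional ℝ V]

theorem exists_finite_closedBall_subset_convexHull {s : Set V} {x : V} (hs : s ∈ 𝓝 x) :
    ∃ T : Set V, T.Finite ∧ convexHull ℝ T ⊆ s ∧ ∃ r > 0, closedBall x r ⊆ convexHull ℝ T := by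
  obtain ⟨b, hxb, hbs⟩ := exists_mem_interior_convexHull_affineBasis hs
  obtain ⟨r, hr, hrb⟩ := nhds_basis_closedBall.mem_iff.1 (isOpen_interior.mem_nhds hxb)
  exact ⟨range b, finite_range b, hbs, r, hr, hrb.trans interior_subset⟩

theorem exists_finite_forall_concaveOn_le_on_closedBall {E : Set V} {f : V → ℝ} {x₀ : V}
    (hE : E ∈ 𝓝 x₀) (hf : ContinuousAt f x₀) {c : ℝ} (hc : c < f x₀) :
    ∃ T : Set V, T.Finite ∧ T ⊆ E ∧ ∃ r > 0, closedBall x₀ r ⊆ E ∧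
      ∀ G : V → ℝ, ConcaveOn ℝ E G → ∀ η, (∀ t ∈ T, f t - η < G t) →
        ∀ w ∈ closedBall x₀ r, c - η ≤ G w := by
  obtain ⟨T, hTfin, hTs, r, hr, hrT⟩ := exists_finite_closedBall_subset_convexHull
    (inter_mem hE (hf.preimage_mem_nhds (Ioi_mem_nhds hc)))
  have hTE : convexHull ℝ T ⊆ E := hTs.trans inter_subset_left
  refine ⟨T, hTfin, (subset_convexHull ℝ T).trans hTE, r, hr, hrT.trans hTE,
    fun G hG η hclose w hw => ?_⟩
  obtain ⟨t, ht, hGt⟩ :=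
    hG.exists_le_of_mem_convexHull ((subset_convexHull ℝ T).trans hTE) (hrT hw)
  have hct : c < f t := (hTs (subset_convexHull ℝ T ht)).2
  linarith [hclose t ht]

theorem exists_finset_dist_lt_of_isMaxOn {E : Set V} {f : V → ℝ} {x₀ : V} (hE : IsOpen E)
    (hf : ContinuousOn f E) (hx₀ : x₀ ∈ E) (hlt : ∀ x ∈ E, x ≠ x₀ → f x < f x₀) {ε : ℝ}
    (hε : 0 < ε) :
    ∃ Z : Finset V, ↑Z ⊆ E ∧ ∃ η > 0, ∀ G : V → ℝ, ConcaveOn ℝ E G → ∀ X ∈ E, IsMaxOn G E X →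
      (∀ z ∈ Z, dist (G z) (f z) < η) → dist (G X) (f x₀) < ε := by
  obtain ⟨T, hTfin, hTE, r, hr, hball, hlow⟩ := exists_finite_forall_concaveOn_le_on_closedBall
    (hE.mem_nhds hx₀) (hf.continuousAt (hE.mem_nhds hx₀)) (show f x₀ - ε / 4 < f x₀ by linarith)
  set δ := r / 2
  have hδ : 0 < δ := by positivity
  rw [show r = 2 * δ by ring] at hball hlow
  have hsphere : sphere x₀ δ ⊆ E :=
    sphere_subset_closedBall.trans ((closedBall_subset_closedBall (by linarith)).trans hball)
  obtain ⟨g, hg, hfg⟩ := (isCompact_sphere x₀ δ).exists_pos_forall_le_sub (hf.mono hsphere)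
    fun u hu => hlt u (hsphere hu) (ne_of_mem_sphere hu hδ.ne')
  -- with this extrapolation ratio the lower bound's loss `ε / 4` costs only `g / 4` on the sphere
  set κ := g / ε
  have hκ : 0 < κ := by positivity
  obtain ⟨Y, hYS, hYfin, hYcov⟩ := (isCompact_sphere x₀ δ).finite_cover_balls (mul_pos hκ hδ)
  set η := min (ε / 8) (g / 8)
  have hZ := (hTfin.union hYfin).insert x₀
  refine ⟨hZ.toFinset, ?_, η, by positivity, ?_⟩
  · intro z hz
    rw [Finset.mem_coe, hZ.mem_toFinset] at hz
    rcases hz with rfl | hzT | hzY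
    exacts [hx₀, hTE hzT, hsphere (hYS hzY)]
  intro G hG X hX hXmax hclose
  have hclose' : ∀ z ∈ insert x₀ (T ∪ Y), f z - η < G z ∧ G z < f z + η := fun z hz => by
    have := hclose z (hZ.mem_toFinset.2 hz)
    rw [Real.dist_eq, abs_sub_lt_iff] at this
    constructor <;> linarith
  obtain ⟨hGx₀_lower, hGx₀_upper⟩ := hclose' x₀ (mem_insert _ _)
  have hGlow := hlow G hG η fun t ht => (hclose' t (mem_insert_of_mem _ (Or.inl ht))).1
  have hGsphere : ∀ u ∈ sphere x₀ δ, G u < G x₀ := by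
    intro u hu
    obtain ⟨y, hy, huy⟩ := mem_iUnion₂.1 (hYcov hu)
    have := hG.le_one_add_mul_sub_mul_of_forall_le hκ hball hGlow
      (sphere_subset_closedBall (hYS hy)) (hsphere hu) (mem_ball.1 huy).le
    have hGy : G y < f x₀ - g + η :=
      (hclose' y (mem_insert_of_mem _ (Or.inr hy))).2.trans_le (by linarith [hfg y (hYS hy)])
    have hκε : κ * ε = g := div_mul_cancel₀ g hε.ne'
    have hηg : η ≤ g / 8 := min_le_right _ _
    nlinarith
  have hGX := hG.le_two_mul_sub_of_isMaxOn hδ.le hball hGlow hGsphere hX hXmax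
  have hGx₀X : G x₀ ≤ G X := hXmax hx₀
  rw [Real.dist_eq, abs_lt]
  constructor <;> linarith [min_le_left (ε / 8) (g / 8)]

end FiniteDimensional

section InMeasure

variable {Ω ι V : Type*} [MeasurableSpace Ω] {μ : Measure Ω} {l : Filter ι}
  {F : ι → Ω → V → ℝ} {f : V → ℝ}

theorem tendsto_measure_exists_le_dist (Z : Finset V)
    (hF : ∀ z ∈ Z, TendstoInMeasure μ (fun i ω => F i ω z) l (fun _ => f z)) {η : ℝ}
    (hη : 0 < η) :
    Tendsto (fun i => μ {ω | ∃ z ∈ Z, η ≤ dist (F i ω z) (f z)}) l (𝓝 0) := by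
  have hsum : Tendsto (fun i => ∑ z ∈ Z, μ {ω | η ≤ dist (F i ω z) (f z)}) l (𝓝 0) := by
    simpa using tendsto_finsetSum Z fun z hz => tendstoInMeasure_iff_dist.1 (hF z hz) η hη
  refine tendsto_of_tendsto_of_tendsto_of_le_of_le tendsto_const_nhds hsum (fun _ => zero_le)
    fun i => (measure_mono ?_).trans (measure_biUnion_finset_le Z _)
  rintro ω ⟨z, hz, hle⟩
  exact mem_iUnion₂.2 ⟨z, hz, hle⟩

theorem tendsto_measure_le_dist_of_forall_dist_lt (Z : Finset V)
    (hF : ∀ z ∈ Z, TendstoInMeasure μ (fun i ω => F i ω z) l (fun _ => f z)) {η : ℝ}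
    (hη : 0 < η) {Y : ι → Ω → ℝ} {c ε : ℝ}
    (hY : ∀ i ω, (∀ z ∈ Z, dist (F i ω z) (f z) < η) → dist (Y i ω) c < ε) :
    Tendsto (fun i => μ {ω | ε ≤ dist (Y i ω) c}) l (𝓝 0) := by
  refine tendsto_of_tendsto_of_tendsto_of_le_of_le tendsto_const_nhds
    (tendsto_measure_exists_le_dist Z hF hη) (fun _ => zero_le) fun i => measure_mono ?_
  intro ω hω
  by_contra hfar
  exact (hY i ω (by simpa using hfar)).not_ge hω

theorem eventually_exists_forall_dist_lt [NeZero μ] (Z : Finset V)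
    (hF : ∀ z ∈ Z, TendstoInMeasure μ (fun i ω => F i ω z) l (fun _ => f z)) {η : ℝ}
    (hη : 0 < η) :
    ∀ᶠ i in l, ∃ ω, ∀ z ∈ Z, dist (F i ω z) (f z) < η := by
  filter_upwards [(tendsto_measure_exists_le_dist Z hF hη).eventually
    (gt_mem_nhds (Measure.measure_univ_pos.2 (NeZero.ne μ)))] with i hi
  by_contra! hall
  exact hi.ne (congrArg μ (eq_univ_of_forall hall))

theorem Convex.concaveOn_of_tendstoInMeasure [AddCommGroup V] [Module ℝ V] [NeZero μ] [l.NeBot]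
    {s : Set V} (hs : Convex ℝ s) (hF : ∀ i ω, ConcaveOn ℝ s (F i ω))
    (hlim : ∀ x ∈ s, TendstoInMeasure μ (fun i ω => F i ω x) l (fun _ => f x)) :
    ConcaveOn ℝ s f := by
  classical
  refine ⟨hs, fun x hx y hy a b ha hb hab => ?_⟩
  have hz : a • x + b • y ∈ s := hs hx hy ha hb hab
  refine le_of_forall_pos_lt_add fun η hη => ?_
  obtain ⟨i, ω, hω⟩ := (eventually_exists_forall_dist_lt {x, y, a • x + b • y}
    (by simpa [forall_and] using ⟨hlim x hx, hlim y hy, hlim _ hz⟩) (half_pos hη)).exists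
  simp only [Finset.mem_insert, Finset.mem_singleton, forall_eq_or_imp, forall_eq,
    Real.dist_eq, abs_sub_lt_iff] at hω
  have := (hF i ω).2 hx hy ha hb hab
  simp only [smul_eq_mul] at this ⊢
  nlinarith

end InMeasure

/-- Andersen–Gill, convergence of attained maxima: let `F_n` be random
concave functions on an open convex `E ⊆ ℝᵖ` with `F_n(x) → f(x)` in probability for every
`x ∈ E`, let `f` have a unique maximum at `x̂ ∈ E`, and let `X̂_n` be random points of `E`
maximizing `F_n`. Then `F_n(X̂_n) → f(x̂)` in probability. -/
theorem attained_max_of_concave_tendsto_in_measure {Ω : Type*} [MeasurableSpace Ω]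
    (μ : Measure Ω) [IsProbabilityMeasure μ] {p : ℕ}
    (E : Set (Fin p → ℝ)) (hEopen : IsOpen E) (hEconv : Convex ℝ E)
    (F : ℕ → Ω → (Fin p → ℝ) → ℝ)
    (hconc : ∀ n ω, ConcaveOn ℝ E (F n ω))
    (f : (Fin p → ℝ) → ℝ)
    (hptwise : ∀ x ∈ E,
      TendstoInMeasure μ (fun n ω => F n ω x) atTop (fun _ => f x))
    (xhat : Fin p → ℝ) (hxhatmem : xhat ∈ E)
    (hmax : ∀ x ∈ E, f x ≤ f xhat)
    (huniq : ∀ x ∈ E, f x = f xhat → x = xhat)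
    (Xhat : ℕ → Ω → Fin p → ℝ)
    (hXhat : ∀ n ω, Xhat n ω ∈ E ∧ ∀ x ∈ E, F n ω x ≤ F n ω (Xhat n ω)) :
    TendstoInMeasure μ (fun n ω => F n ω (Xhat n ω)) atTop (fun _ => f xhat) := by
  have hfcont : ContinuousOn f E :=
    (hEconv.concaveOn_of_tendstoInMeasure hconc hptwise).continuousOn hEopen
  have hlt : ∀ x ∈ E, x ≠ xhat → f x < f xhat := fun x hx hne =>
    (hmax x hx).lt_of_ne (mt (huniq x hx) hne)
  rw [tendstoInMeasure_iff_dist]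
  intro ε hε
  obtain ⟨Z, hZE, η, hη, hZ⟩ := exists_finset_dist_lt_of_isMaxOn hEopen hfcont hxhatmem hlt hε
  exact tendsto_measure_le_dist_of_forall_dist_lt Z (fun z hz => hptwise z (hZE hz)) hη
    fun n ω => hZ _ (hconc n ω) _ (hXhat n ω).1 (hXhat n ω).2
end
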